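/- arXiv:1804.10153 — 6 statements merged into one kernel-verified Lean document; each statement's English description precedes it below -/
import Mathlib

section
/- Let C be a category with finite products such that the category Ab(C) of abelian group objects in C has coequalizers and the forgetful functor Ab(C) → C has a left adjoint. Then for any two objects A, A' of Ab(C), a tensor product A ⊗ A' exists in Ab(C), i.e. an object corepresenting the functor sending B to the set of bilinear morphisms A × A' → B. -/
open CategoryTheory Limits

universe v u

/-- An abelian group object in a category `C`: an object `A` together with a lift of the
Yoneda functor `Hom_C(-, A)` to abelian groups, i.e. a natural abelian group structure on
all hom-sets into `A`. -/
structure AbObj (C : Type u) [Category.{v} C] : Type max u v where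
  X : C
  str : ∀ Y : C, AddCommGroup (Y ⟶ X)
  comp_add : ∀ {Y Z : C} (f : Z ⟶ Y) (g h : Y ⟶ X),
    letI := str Y
    letI := str Z
    f ≫ (g + h) = f ≫ g + f ≫ h

variable {C : Type u} [Category.{v} C]

/-- Morphisms of abelian group objects: morphisms of `C` inducing additive maps on
hom-sets. -/
@[ext]
structure AbHom (A B : AbObj C) : Type v where
  hom : A.X ⟶ B.X
  add_comp : ∀ {Y : C} (g h : Y ⟶ A.X),
    letI := A.str Y
    letI := B.str Y
    (g + h) ≫ hom = g ≫ hom + h ≫ hom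

instance : Category (AbObj C) where
  Hom := AbHom
  id A := ⟨𝟙 A.X, by intro Y g h; simp⟩
  comp f g := ⟨f.hom ≫ g.hom, by
    intro Y a b
    rw [← Category.assoc, f.add_comp, g.add_comp, Category.assoc, Category.assoc]⟩

@[ext]
lemma AbObj.hom_ext {A B : AbObj C} (f g : A ⟶ B) (h : f.hom = g.hom) : f = g :=
  AbHom.ext h

/-- The forgetful functor from abelian group objects of `C` to `C`. -/
def forgetAb (C : Type u) [Category.{v} C] : AbObj C ⥤ C where
  obj A := A.X
  map f := f.hom

/-- A morphism `A × A' ⟶ B` is bilinear if the induced natural transformation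
`Hom(-, A) × Hom(-, A') → Hom(-, B)` is bilinear (additive in each variable). -/
def IsBilinearMor [HasBinaryProducts C] (A A' B : AbObj C) (b : A.X ⨯ A'.X ⟶ B.X) : Prop :=
  (∀ (Y : C) (f₁ f₂ : Y ⟶ A.X) (g : Y ⟶ A'.X),
      letI := A.str Y
      letI := B.str Y
      prod.lift (f₁ + f₂) g ≫ b = prod.lift f₁ g ≫ b + prod.lift f₂ g ≫ b) ∧
  (∀ (Y : C) (f : Y ⟶ A.X) (g₁ g₂ : Y ⟶ A'.X),
      letI := A'.str Y
      letI := B.str Y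
      prod.lift f (g₁ + g₂) ≫ b = prod.lift f g₁ ≫ b + prod.lift f g₂ ≫ b)

/-! The tensor product is the free abelian group object `F (A × A')` modulo the bilinearity
relations. Bilinearity of `b : A × A' ⟶ B` is natural in the test object, so it is enough to check
it at the generic point: it amounts to two equations `u ≫ b = v ≫ b + w ≫ b` for morphisms
`u v w` out of `(A × A) × A'` and out of `A × (A' × A')`. Transposing along `F ⊣ forget`, each
becomes `F u ≫ φ = (F v + F w) ≫ φ`, and two successive coequalizers impose both relations. -/

theorem exists_universal_of_two_pairs {D : Type*} [Category D] [HasCoequalizers D]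
    {X Y₁ Y₂ : D} (r₁ s₁ : Y₁ ⟶ X) (r₂ s₂ : Y₂ ⟶ X) :
    ∃ (T : D) (p : X ⟶ T), r₁ ≫ p = s₁ ≫ p ∧ r₂ ≫ p = s₂ ≫ p ∧
      ∀ {B : D} (φ : X ⟶ B), r₁ ≫ φ = s₁ ≫ φ → r₂ ≫ φ = s₂ ≫ φ → ∃! f : T ⟶ B, p ≫ f = φ := by
  let π₁ := coequalizer.π r₁ s₁
  let π₂ := coequalizer.π (r₂ ≫ π₁) (s₂ ≫ π₁)
  refine ⟨_, π₁ ≫ π₂, by rw [coequalizer.condition_assoc], by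
    simpa using coequalizer.condition (r₂ ≫ π₁) (s₂ ≫ π₁), fun φ h₁ h₂ => ?_⟩
  refine ⟨coequalizer.desc (coequalizer.desc φ h₁) (by simpa [π₁] using h₂), by simp [π₁, π₂],
    fun f hf => (cancel_epi (π₁ ≫ π₂)).mp ?_⟩
  simp [π₁, π₂, hf]

namespace AbObj

instance {X B : AbObj C} : Add (X ⟶ B) where
  add φ ψ :=
    { hom := letI := B.str X.X; φ.hom + ψ.hom
      add_comp := fun {Y} g h => by
        let := X.str Y
        let := B.str Y
        rw [B.comp_add, B.comp_add, B.comp_add, φ.add_comp, ψ.add_comp]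
        abel }

lemma add_comp {X B B' : AbObj C} (φ ψ : X ⟶ B) (χ : B ⟶ B') : (φ + ψ) ≫ χ = φ ≫ χ + ψ ≫ χ :=
  AbObj.hom_ext _ _ (χ.add_comp φ.hom ψ.hom)

variable [HasBinaryProducts C]

noncomputable def addMor (A : AbObj C) : A.X ⨯ A.X ⟶ A.X :=
  letI := A.str (A.X ⨯ A.X); prod.fst + prod.snd

lemma lift_comp_addMor (A : AbObj C) {Y : C} (f₁ f₂ : Y ⟶ A.X) :
    letI := A.str Y; prod.lift f₁ f₂ ≫ A.addMor = f₁ + f₂ := by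
  rw [addMor, A.comp_add, prod.lift_fst, prod.lift_snd]

end AbObj

section Bilinear

variable [HasBinaryProducts C]

lemma forall_lift_add_left_iff {A B : AbObj C} {Z : C} (b : A.X ⨯ Z ⟶ B.X) :
    (∀ (Y : C) (f₁ f₂ : Y ⟶ A.X) (g : Y ⟶ Z),
      letI := A.str Y
      letI := B.str Y
      prod.lift (f₁ + f₂) g ≫ b = prod.lift f₁ g ≫ b + prod.lift f₂ g ≫ b) ↔
    letI := B.str ((A.X ⨯ A.X) ⨯ Z)
    prod.map A.addMor (𝟙 Z) ≫ b = prod.map prod.fst (𝟙 Z) ≫ b + prod.map prod.snd (𝟙 Z) ≫ b := by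
  have at_lift : ∀ {Y : C} (f₁ f₂ : Y ⟶ A.X) (g : Y ⟶ Z),
      letI := A.str Y
      letI := B.str Y
      prod.lift (f₁ + f₂) g ≫ b = prod.lift f₁ g ≫ b + prod.lift f₂ g ≫ b ↔
        prod.lift (prod.lift f₁ f₂) g ≫ prod.map A.addMor (𝟙 Z) ≫ b =
          prod.lift (prod.lift f₁ f₂) g ≫ prod.map prod.fst (𝟙 Z) ≫ b +
            prod.lift (prod.lift f₁ f₂) g ≫ prod.map prod.snd (𝟙 Z) ≫ b := by
    intro Y f₁ f₂ g
    rw [prod.lift_map_assoc, prod.lift_map_assoc, prod.lift_map_assoc, A.lift_comp_addMor,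
      prod.lift_fst, prod.lift_snd, Category.comp_id]
  refine ⟨fun h => ?_, fun h Y f₁ f₂ g => ?_⟩
  · have := (at_lift _ _ _).mp (h _ (prod.fst ≫ prod.fst) (prod.fst ≫ prod.snd) prod.snd)
    rwa [← prod.comp_lift, prod.lift_fst_snd, Category.comp_id, prod.lift_fst_snd,
      Category.id_comp, Category.id_comp, Category.id_comp] at this
  · let := B.str Y
    rw [at_lift, h, B.comp_add]

lemma forall_lift_add_right_iff {A B : AbObj C} {Z : C} (b : Z ⨯ A.X ⟶ B.X) :
    (∀ (Y : C) (f : Y ⟶ Z) (g₁ g₂ : Y ⟶ A.X),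
      letI := A.str Y
      letI := B.str Y
      prod.lift f (g₁ + g₂) ≫ b = prod.lift f g₁ ≫ b + prod.lift f g₂ ≫ b) ↔
    letI := B.str (Z ⨯ (A.X ⨯ A.X))
    prod.map (𝟙 Z) A.addMor ≫ b = prod.map (𝟙 Z) prod.fst ≫ b + prod.map (𝟙 Z) prod.snd ≫ b := by
  have at_lift : ∀ {Y : C} (f : Y ⟶ Z) (g₁ g₂ : Y ⟶ A.X),
      letI := A.str Y
      letI := B.str Y
      prod.lift f (g₁ + g₂) ≫ b = prod.lift f g₁ ≫ b + prod.lift f g₂ ≫ b ↔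
        prod.lift f (prod.lift g₁ g₂) ≫ prod.map (𝟙 Z) A.addMor ≫ b =
          prod.lift f (prod.lift g₁ g₂) ≫ prod.map (𝟙 Z) prod.fst ≫ b +
            prod.lift f (prod.lift g₁ g₂) ≫ prod.map (𝟙 Z) prod.snd ≫ b := by
    intro Y f g₁ g₂
    rw [prod.lift_map_assoc, prod.lift_map_assoc, prod.lift_map_assoc, A.lift_comp_addMor,
      prod.lift_fst, prod.lift_snd, Category.comp_id]
  refine ⟨fun h => ?_, fun h Y f g₁ g₂ => ?_⟩
  · have := (at_lift _ _ _).mp (h _ prod.fst (prod.snd ≫ prod.fst) (prod.snd ≫ prod.snd))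
    rwa [← prod.comp_lift, prod.lift_fst_snd, Category.comp_id, prod.lift_fst_snd,
      Category.id_comp, Category.id_comp, Category.id_comp] at this
  · let := B.str Y
    rw [at_lift, h, B.comp_add]

lemma isBilinearMor_iff {A A' B : AbObj C} (b : A.X ⨯ A'.X ⟶ B.X) :
    IsBilinearMor A A' B b ↔
      (letI := B.str ((A.X ⨯ A.X) ⨯ A'.X);
        prod.map A.addMor (𝟙 A'.X) ≫ b =
          prod.map prod.fst (𝟙 A'.X) ≫ b + prod.map prod.snd (𝟙 A'.X) ≫ b) ∧
      (letI := B.str (A.X ⨯ (A'.X ⨯ A'.X));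
        prod.map (𝟙 A.X) A'.addMor ≫ b =
          prod.map (𝟙 A.X) prod.fst ≫ b + prod.map (𝟙 A.X) prod.snd ≫ b) :=
  and_congr (forall_lift_add_left_iff b) (forall_lift_add_right_iff b)

end Bilinear

section Free

variable {F : C ⥤ AbObj C} (adj : F ⊣ forgetAb C)

def freeHomEquiv (W : C) (B : AbObj C) : (F.obj W ⟶ B) ≃ (W ⟶ B.X) :=
  adj.homEquiv W B

lemma freeHomEquiv_add {W : C} {B : AbObj C} (φ ψ : F.obj W ⟶ B) :
    letI := B.str W
    freeHomEquiv adj W B (φ + ψ) = freeHomEquiv adj W B φ + freeHomEquiv adj W B ψ :=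
  B.comp_add _ _ _

lemma freeHomEquiv_map_comp {W P : C} {B : AbObj C} (u : W ⟶ P) (φ : F.obj P ⟶ B) :
    freeHomEquiv adj W B (F.map u ≫ φ) = u ≫ freeHomEquiv adj P B φ :=
  adj.homEquiv_naturality_left u φ

lemma freeHomEquiv_comp {P : C} {T B : AbObj C} (p : F.obj P ⟶ T) (f : T ⟶ B) :
    freeHomEquiv adj P B (p ≫ f) = freeHomEquiv adj P T p ≫ f.hom :=
  adj.homEquiv_naturality_right p f

lemma comp_freeHomEquiv_eq_add_iff {W P : C} {B : AbObj C} (u v w : W ⟶ P) (φ : F.obj P ⟶ B) :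
    letI := B.str W
    u ≫ freeHomEquiv adj P B φ = v ≫ freeHomEquiv adj P B φ + w ≫ freeHomEquiv adj P B φ ↔
      F.map u ≫ φ = (F.map v + F.map w) ≫ φ := by
  rw [← (freeHomEquiv adj W B).apply_eq_iff_eq, AbObj.add_comp, freeHomEquiv_add,
    freeHomEquiv_map_comp, freeHomEquiv_map_comp, freeHomEquiv_map_comp]

end Free

/-- **Goerss.** If `C` has finite products, `Ab(C)` has coequalizers, and the
forgetful functor `Ab(C) → C` has a left adjoint, then any two abelian group objects
`A`, `A'` admit a tensor product: an object `A ⊗ A'` of `Ab(C)` together with a universal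
bilinear morphism `A × A' ⟶ A ⊗ A'`. -/
theorem abObj_tensor_exists (C : Type u) [Category.{v} C] [HasFiniteProducts C]
    [HasCoequalizers (AbObj C)] [(forgetAb C).IsRightAdjoint]
    (A A' : AbObj C) :
    ∃ (T : AbObj C) (a : A.X ⨯ A'.X ⟶ T.X), IsBilinearMor A A' T a ∧
      ∀ (B : AbObj C) (b : A.X ⨯ A'.X ⟶ B.X), IsBilinearMor A A' B b →
        ∃! f : T ⟶ B, a ≫ f.hom = b := by
  let F := (forgetAb C).leftAdjoint
  let adj : F ⊣ forgetAb C := Adjunction.ofIsRightAdjoint (forgetAb C)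
  obtain ⟨T, p, hp₁, hp₂, univ⟩ := exists_universal_of_two_pairs
    (F.map (prod.map A.addMor (𝟙 A'.X)))
    (F.map (prod.map prod.fst (𝟙 A'.X)) + F.map (prod.map prod.snd (𝟙 A'.X)))
    (F.map (prod.map (𝟙 A.X) A'.addMor))
    (F.map (prod.map (𝟙 A.X) prod.fst) + F.map (prod.map (𝟙 A.X) prod.snd))
  refine ⟨T, freeHomEquiv adj _ T p, ?_, fun B b hb => ?_⟩
  · rw [isBilinearMor_iff, comp_freeHomEquiv_eq_add_iff, comp_freeHomEquiv_eq_add_iff]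
    exact ⟨hp₁, hp₂⟩
  · obtain ⟨φ, rfl⟩ := (freeHomEquiv adj _ B).surjective b
    rw [isBilinearMor_iff, comp_freeHomEquiv_eq_add_iff, comp_freeHomEquiv_eq_add_iff] at hb
    simpa only [← freeHomEquiv_comp, Equiv.apply_eq_iff_eq] using univ φ hb.1 hb.2
end

section
/- Let A be a commutative ring, p a prime, and for n ∈ ℤ let W^n(A) be the set of p-typical Witt vectors (a_0, a_1, ...) such that a_i lies in (nil A)^{p^{i-n}} for all i (with the convention that the exponent is interpreted as nil A when i ≤ n), where nil A is the nilradical. Then W^n(A) is a subgroup of the additive group of the ring of p-typical Witt vectors W(A). -/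
open MvPolynomial Finset

section Aux

/-- Transfer weighted homogeneity along `rename`. -/
theorem aux_isWeightedHomogeneous_rename {σ τ R M : Type*} [CommSemiring R] [AddCommMonoid M]
    {w : τ → M} (f : σ → τ) {φ : MvPolynomial σ R} {m : M}
    (h : IsWeightedHomogeneous (w ∘ f) φ m) :
    IsWeightedHomogeneous w (rename f φ) m := by
  intro d hd
  obtain ⟨u, rfl, hu⟩ := coeff_rename_ne_zero f φ d hd
  rw [← h hu]
  simp only [Finsupp.weight, LinearMap.toAddMonoidHom_coe]
  rw [Finsupp.linearCombination_mapDomain]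

/-- Transfer weighted homogeneity along a ring hom `map`. -/
theorem aux_isWeightedHomogeneous_map {σ R S M : Type*} [CommSemiring R] [CommSemiring S]
    [AddCommMonoid M] {w : σ → M} (f : R →+* S) {φ : MvPolynomial σ R} {m : M}
    (h : IsWeightedHomogeneous w φ m) :
    IsWeightedHomogeneous w (MvPolynomial.map f φ) m := by
  intro d hd
  apply h
  intro h0
  rw [coeff_map, h0, map_zero] at hd
  exact hd rfl

theorem aux_isWeightedHomogeneous_pow {σ R : Type*} [CommSemiring R]
    {w : σ → ℕ} {φ : MvPolynomial σ R} {m : ℕ}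
    (h : IsWeightedHomogeneous w φ m) (k : ℕ) :
    IsWeightedHomogeneous w (φ ^ k) (k * m) := by
  induction k with
  | zero => simpa using isWeightedHomogeneous_one R w
  | succ k ih =>
    rw [pow_succ, add_mul, one_mul]
    exact ih.mul h

/-- Weighted homogeneity of a `bind₁`. -/
theorem aux_isWeightedHomogeneous_bind₁ {σ τ R : Type*} [CommSemiring R]
    {u : σ → ℕ} {w : τ → ℕ} {Φ : MvPolynomial σ R} {m c : ℕ}
    (hΦ : IsWeightedHomogeneous u Φ m) (f : σ → MvPolynomial τ R)
    (hf : ∀ b, IsWeightedHomogeneous w (f b) (c * u b)) :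
    IsWeightedHomogeneous w (bind₁ f Φ) (c * m) := by
  rw [bind₁, aeval_def, eval₂_eq]
  apply IsWeightedHomogeneous.sum
  intro d hd
  by_cases hd0 : coeff d Φ = 0
  · rw [hd0]
    simp only [map_zero, zero_mul]
    exact isWeightedHomogeneous_zero R w _
  have hwd : Finsupp.weight u d = m := hΦ hd0
  have : IsWeightedHomogeneous w (∏ i ∈ d.support, f i ^ d i)
      (∑ i ∈ d.support, d i * (c * u i)) :=
    IsWeightedHomogeneous.prod _ _ _ fun i _ => aux_isWeightedHomogeneous_pow (hf i) (d i)
  have hsum : (∑ i ∈ d.support, d i * (c * u i)) = c * m := by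
    rw [← hwd, Finsupp.weight_apply, Finsupp.sum, Finset.mul_sum]
    apply Finset.sum_congr rfl
    intro i _
    rw [smul_eq_mul]
    ring
  rw [algebraMap_eq]
  have h := (isWeightedHomogeneous_C w (coeff d Φ)).mul this
  rw [zero_add, hsum] at h
  exact h

theorem aux_wittPolynomial_isWeightedHomogeneous (p : ℕ) (R : Type*) [CommRing R] (n : ℕ) :
    IsWeightedHomogeneous (fun i : ℕ => p ^ i) (wittPolynomial p R n) (p ^ n) := by
  rw [wittPolynomial]
  apply IsWeightedHomogeneous.sum
  intro i hi
  rw [mem_range] at hi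
  apply isWeightedHomogeneous_monomial
  have hs : (Finsupp.weight fun i : ℕ => p ^ i) (Finsupp.single i (p ^ (n - i)))
      = p ^ (n - i) * p ^ i := by
    rw [Finsupp.weight_apply, Finsupp.sum_single_index] <;> simp
  rw [hs, ← pow_add]
  congr 1
  omega

theorem aux_wittStructureRat_isWeightedHomogeneous (p : ℕ) [hp : Fact p.Prime] {idx : Type*}
    (Φ : MvPolynomial idx ℚ) (hΦ : IsWeightedHomogeneous (fun _ => 1) Φ 1) (n : ℕ) :
    IsWeightedHomogeneous (fun bi : idx × ℕ => p ^ bi.2) (wittStructureRat p Φ n) (p ^ n) := by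
  induction n using Nat.strong_induction_on with
  | _ n ih =>
  rw [wittStructureRat_rec]
  have h1 : IsWeightedHomogeneous (fun bi : idx × ℕ => p ^ bi.2)
      (bind₁ (fun b => rename (fun i => (b, i)) (wittPolynomial p ℚ n)) Φ) (p ^ n) := by
    have hf : ∀ b : idx, IsWeightedHomogeneous (fun bi : idx × ℕ => p ^ bi.2)
        (rename (fun i => (b, i)) (wittPolynomial p ℚ n)) (p ^ n * 1) := by
      intro b
      rw [mul_one]
      exact aux_isWeightedHomogeneous_rename _
        (aux_wittPolynomial_isWeightedHomogeneous p ℚ n)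
    have := aux_isWeightedHomogeneous_bind₁ hΦ _ hf
    rwa [mul_one] at this
  have h2 : IsWeightedHomogeneous (fun bi : idx × ℕ => p ^ bi.2)
      (∑ i ∈ range n, C ((p : ℚ) ^ i) * wittStructureRat p Φ i ^ p ^ (n - i)) (p ^ n) := by
    apply IsWeightedHomogeneous.sum
    intro i hi
    rw [mem_range] at hi
    have := (isWeightedHomogeneous_C (fun bi : idx × ℕ => p ^ bi.2) ((p : ℚ) ^ i)).mul
      (aux_isWeightedHomogeneous_pow (ih i hi) (p ^ (n - i)))
    rw [zero_add] at this
    have hexp : p ^ (n - i) * p ^ i = p ^ n := by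
      rw [← pow_add]
      congr 1
      omega
    rwa [hexp] at this
  have h3 : IsWeightedHomogeneous (fun bi : idx × ℕ => p ^ bi.2)
      ((bind₁ (fun b => rename (fun i => (b, i)) (wittPolynomial p ℚ n)) Φ) -
        ∑ i ∈ range n, C ((p : ℚ) ^ i) * wittStructureRat p Φ i ^ p ^ (n - i)) (p ^ n) := by
    rw [← mem_weightedHomogeneousSubmodule] at h1 h2 ⊢
    exact Submodule.sub_mem _ h1 h2
  have := (isWeightedHomogeneous_C (fun bi : idx × ℕ => p ^ bi.2) (1 / (p : ℚ) ^ n)).mul h3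
  rwa [zero_add] at this

theorem aux_wittStructureInt_isWeightedHomogeneous (p : ℕ) [hp : Fact p.Prime] {idx : Type*}
    (Φ : MvPolynomial idx ℤ) (hΦ : IsWeightedHomogeneous (fun _ => 1) Φ 1) (n : ℕ) :
    IsWeightedHomogeneous (fun bi : idx × ℕ => p ^ bi.2) (wittStructureInt p Φ n) (p ^ n) := by
  intro d hd
  have h2 : coeff d (wittStructureRat p (MvPolynomial.map (Int.castRingHom ℚ) Φ) n) ≠ 0 := by
    rw [← map_wittStructureInt, coeff_map]
    simpa using hd
  exact aux_wittStructureRat_isWeightedHomogeneous p _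
    (aux_isWeightedHomogeneous_map _ hΦ) n h2

theorem aux_prod_pow_mem {A : Type*} [CommRing A] (I : Ideal A) {σ : Type*} (s : Finset σ)
    (f : σ → A) (e : σ → ℕ) (d : σ → ℕ) (hf : ∀ v ∈ s, f v ∈ I ^ e v) :
    (∏ v ∈ s, f v ^ d v) ∈ I ^ (∑ v ∈ s, d v * e v) := by
  classical
  induction s using Finset.induction with
  | empty => simp
  | @insert a s ha ih =>
    rw [Finset.prod_insert ha, Finset.sum_insert ha, pow_add]
    apply Ideal.mul_mem_mul
    · rw [mul_comm, pow_mul]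
      exact Ideal.pow_mem_pow (hf a (mem_insert_self _ _)) _
    · exact ih fun v hv => hf v (mem_insert_of_mem hv)

/-- The evaluation of an integral weighted-homogeneous polynomial lands in a power of an ideal. -/
theorem aux_aeval_mem_pow {σ A : Type*} [CommRing A] (I : Ideal A) (P : MvPolynomial σ ℤ)
    {w : σ → ℕ} {m : ℕ} (hP : IsWeightedHomogeneous w P m) (hm : m ≠ 0)
    (f : σ → A) (e : σ → ℕ) (hf : ∀ v, f v ∈ I ^ e v) (k : ℕ)
    (hk : ∀ d : σ →₀ ℕ, d ≠ 0 → Finsupp.weight w d = m →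
      k ≤ ∑ v ∈ d.support, d v * e v) :
    aeval f P ∈ I ^ k := by
  rw [aeval_def, eval₂_eq]
  apply Ideal.sum_mem
  intro d hd
  have hwd : Finsupp.weight w d = m := hP (mem_support_iff.mp hd)
  have hdne : d ≠ 0 := by
    rintro rfl
    rw [map_zero] at hwd
    exact hm hwd.symm
  apply Ideal.mul_mem_left
  exact Ideal.pow_le_pow_right (hk d hdne hwd)
    (aux_prod_pow_mem I d.support f e d fun v _ => hf v)

/-- The key arithmetic inequality. -/
theorem aux_key_ineq {p : ℕ} (hp : 1 < p) (n : ℤ) (i : ℕ) {σ : Type*} (g : σ → ℕ)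
    (d : σ →₀ ℕ) (hd : d ≠ 0)
    (hw : (∑ v ∈ d.support, d v * p ^ g v) = p ^ i) :
    p ^ ((i : ℤ) - n).toNat ≤ ∑ v ∈ d.support, d v * p ^ ((g v : ℤ) - n).toNat := by
  have hp1 : 1 ≤ p := hp.le
  by_cases hin : (i : ℤ) - n ≤ 0
  · rw [Int.toNat_of_nonpos hin, pow_zero]
    obtain ⟨v, hv⟩ : ∃ v, v ∈ d.support := by
      by_contra h
      push_neg at h
      exact hd (Finsupp.support_eq_empty.mp (Finset.eq_empty_iff_forall_notMem.mpr h))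
    calc (1 : ℕ) ≤ d v * p ^ ((g v : ℤ) - n).toNat := by
          have h1 : 1 ≤ d v := Nat.one_le_iff_ne_zero.mpr (Finsupp.mem_support_iff.mp hv)
          have h2 : 1 ≤ p ^ ((g v : ℤ) - n).toNat := Nat.one_le_pow _ _ (by omega)
          exact Nat.one_le_iff_ne_zero.mpr (by positivity)
      _ ≤ _ := Finset.single_le_sum
          (f := fun v => d v * p ^ ((g v : ℤ) - n).toNat) (fun _ _ => Nat.zero_le _) hv
  · push_neg at hin
    set a := n.toNat with ha
    set b := (-n).toNat with hb
    have key : ∀ j : ℕ, j + b ≤ ((j : ℤ) - n).toNat + a := by intro j; omega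
    have exp_eq : ((i : ℤ) - n).toNat + a = i + b := by omega
    have hcancel : p ^ ((i : ℤ) - n).toNat * p ^ a ≤
        (∑ v ∈ d.support, d v * p ^ ((g v : ℤ) - n).toNat) * p ^ a := by
      calc p ^ ((i : ℤ) - n).toNat * p ^ a = p ^ i * p ^ b := by
            rw [← pow_add, ← pow_add, exp_eq]
        _ = (∑ v ∈ d.support, d v * p ^ g v) * p ^ b := by rw [hw]
        _ = ∑ v ∈ d.support, d v * (p ^ g v * p ^ b) := by
            rw [Finset.sum_mul]
            exact Finset.sum_congr rfl fun v _ => by ring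
        _ ≤ ∑ v ∈ d.support, d v * (p ^ ((g v : ℤ) - n).toNat * p ^ a) := by
            apply Finset.sum_le_sum
            intro v _
            apply Nat.mul_le_mul_left
            rw [← pow_add, ← pow_add]
            exact Nat.pow_le_pow_right hp1 (key (g v))
        _ = (∑ v ∈ d.support, d v * p ^ ((g v : ℤ) - n).toNat) * p ^ a := by
            rw [Finset.sum_mul]
            exact Finset.sum_congr rfl fun v _ => by ring
    exact Nat.le_of_mul_le_mul_right hcancel (pow_pos (by omega : 0 < p) a)

end Aux

/-- For a commutative ring `A`, a prime `p` and `n : ℤ`, the set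
`W^n(A)` of `p`-typical Witt vectors `(a₀, a₁, …)` with `aᵢ ∈ (nil A)^(p^(i-n))`
(the exponent being interpreted as `1`, i.e. the ideal `nil A` itself, when `i ≤ n`)
is an additive subgroup of the ring of `p`-typical Witt vectors `W(A)`. -/
theorem witt_finitary_subgroup (p : ℕ) [Fact p.Prime] (A : Type*) [CommRing A] (n : ℤ) :
    ∃ S : AddSubgroup (WittVector p A),
      ∀ x : WittVector p A,
        x ∈ S ↔ ∀ i : ℕ, x.coeff i ∈ nilradical A ^ p ^ ((i : ℤ) - n).toNat := by
  have hp1 : 1 < p := (Fact.out : p.Prime).one_lt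
  set I : Ideal A := nilradical A
  -- the general membership lemma
  have main : ∀ {k : ℕ} (P : MvPolynomial (Fin k × ℕ) ℤ) (i : ℕ)
      (_ : IsWeightedHomogeneous (fun bi : Fin k × ℕ => p ^ bi.2) P (p ^ i))
      (f : Fin k → ℕ → A) (_ : ∀ (b : Fin k) (j : ℕ), f b j ∈ I ^ p ^ ((j : ℤ) - n).toNat),
      WittVector.peval P f ∈ I ^ p ^ ((i : ℤ) - n).toNat := by
    intro k P i hP f hf
    show MvPolynomial.aeval (Function.uncurry f) P ∈ _
    apply aux_aeval_mem_pow I P hP (pow_ne_zero _ (by omega)) _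
      (fun v => p ^ ((v.2 : ℤ) - n).toNat) ?_
    · intro d hd0 hwd
      apply aux_key_ineq hp1 n i _ d hd0
      rw [Finsupp.weight_apply, Finsupp.sum] at hwd
      simpa [smul_eq_mul] using hwd
    · rintro ⟨b, j⟩
      exact hf b j
  refine ⟨{ carrier := {x | ∀ i : ℕ, x.coeff i ∈ I ^ p ^ ((i : ℤ) - n).toNat}
            zero_mem' := by
              intro i
              simp only [WittVector.zero_coeff]
              exact Ideal.zero_mem _
            add_mem' := ?_
            neg_mem' := ?_ }, fun x => Iff.rfl⟩
  · intro x y hx hy i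
    rw [WittVector.add_coeff]
    have hΦ : IsWeightedHomogeneous (fun _ : Fin 2 => 1)
        ((X 0 + X 1 : MvPolynomial (Fin 2) ℤ)) 1 :=
      (isWeightedHomogeneous_X ℤ _ 0).add (isWeightedHomogeneous_X ℤ _ 1)
    apply main (WittVector.wittAdd p i) i
      (aux_wittStructureInt_isWeightedHomogeneous p _ hΦ i)
    intro b j
    fin_cases b
    · simpa using hx j
    · simpa using hy j
  · intro x hx i
    rw [WittVector.neg_coeff]
    have hΦ : IsWeightedHomogeneous (fun _ : Fin 1 => 1)
        ((-X 0 : MvPolynomial (Fin 1) ℤ)) 1 := by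
      have h0 := isWeightedHomogeneous_X ℤ (fun _ : Fin 1 => 1) 0
      rw [← mem_weightedHomogeneousSubmodule] at h0 ⊢
      exact Submodule.neg_mem _ h0
    apply main (WittVector.wittNeg p i) i
      (aux_wittStructureInt_isWeightedHomogeneous p _ hΦ i)
    intro b j
    fin_cases b
    simpa using hx j
end

section
/- Let k be an algebraically closed field of characteristic p > 0 and let n = p. The tensor product (in the category of affine abelian group schemes over k) of the group scheme μ_p of p-th roots of unity with itself is the trivial group scheme: μ_p ⊗ μ_p = 0. -/
/-! Fix `x ∈ μ_p(R)` and let `γ = b(x, u) ∈ H(R[ℤ/p])`, where `u = [1]` is the tautological point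
of `μ_p`; every `b(x, y)` is a specialization of `γ`. Right bilinearity makes `γ` a homomorphism
`μ_p → H`, and since `x ≡ 1` modulo `ν = x - 1`, left bilinearity gives `γ ≡ 0` modulo `ν`.
Over a square-zero thickening the group law of `H` is addition of deviations from `0`, and a group
algebra has no nonzero primitive elements; hence `γ ≡ 0` modulo an ideal `I` forces `γ ≡ 0`
modulo any `J ⊇ I²`, so `γ ≡ 0` modulo every power of `ν`. In characteristic `p`,
`ν ^ p = x ^ p - 1 = 0`, so `γ = 0`. -/


/-- An affine abelian group scheme over `k`, presented via its functor of points: a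
commutative `k`-algebra `C` (the coordinate ring) together with a natural abelian group
structure on the representable functor `R ↦ Hom_{k-alg}(C, R)`. -/
structure AffAbGrp (k : Type) [CommRing k] : Type 1 where
  C : Type
  [commRing : CommRing C]
  [algebra : Algebra k C]
  add : ∀ (R : Type) [CommRing R] [Algebra k R],
    (C →ₐ[k] R) → (C →ₐ[k] R) → (C →ₐ[k] R)
  zero : ∀ (R : Type) [CommRing R] [Algebra k R], (C →ₐ[k] R)
  neg : ∀ (R : Type) [CommRing R] [Algebra k R], (C →ₐ[k] R) → (C →ₐ[k] R)
  add_assoc : ∀ (R : Type) [CommRing R] [Algebra k R] (f g h : C →ₐ[k] R),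
    add R (add R f g) h = add R f (add R g h)
  add_comm : ∀ (R : Type) [CommRing R] [Algebra k R] (f g : C →ₐ[k] R),
    add R f g = add R g f
  zero_add : ∀ (R : Type) [CommRing R] [Algebra k R] (f : C →ₐ[k] R),
    add R (zero R) f = f
  neg_add : ∀ (R : Type) [CommRing R] [Algebra k R] (f : C →ₐ[k] R),
    add R (neg R f) f = zero R
  map_add : ∀ (R S : Type) [CommRing R] [Algebra k R] [CommRing S] [Algebra k S]
    (ψ : R →ₐ[k] S) (f g : C →ₐ[k] R),
    ψ.comp (add R f g) = add S (ψ.comp f) (ψ.comp g)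
  map_zero : ∀ (R S : Type) [CommRing R] [Algebra k R] [CommRing S] [Algebra k S]
    (ψ : R →ₐ[k] S), ψ.comp (zero R) = zero S

attribute [instance] AffAbGrp.commRing AffAbGrp.algebra

/-- The group functor `μ_p` of `p`-th roots of unity: over `R` it is the subgroup
`{x ∈ Rˣ : x^p = 1}`. -/
def mu (p : ℕ) (R : Type) [CommRing R] : Subgroup Rˣ :=
  MonoidHom.ker (powMonoidHom p : Rˣ →* Rˣ)

/-- Functoriality of `μ_p` in `R`. -/
def muMap (p : ℕ) {R S : Type} [CommRing R] [CommRing S] (ψ : R →+* S) (x : mu p R) :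
    mu p S :=
  ⟨Units.map ψ.toMonoidHom (x : Rˣ), by
    have hx : (x : Rˣ) ^ p = 1 := x.2
    simp only [mu, MonoidHom.mem_ker, powMonoidHom_apply, ← map_pow, hx, map_one]⟩

open AddMonoidAlgebra

namespace AffAbGrp

variable {k : Type} [CommRing k] (H : AffAbGrp k)

theorem add_zero (T : Type) [CommRing T] [Algebra k T] (f : H.C →ₐ[k] T) :
    H.add T f (H.zero T) = f := by
  rw [H.add_comm, H.zero_add]

theorem eq_zero_of_add_self (T : Type) [CommRing T] [Algebra k T] {f : H.C →ₐ[k] T}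
    (hf : H.add T f f = f) : f = H.zero T := by
  have h := congrArg (H.add T (H.neg T f)) hf
  rwa [← H.add_assoc, H.neg_add, H.zero_add] at h

theorem map_zero_apply {S T : Type} [CommRing S] [Algebra k S] [CommRing T] [Algebra k T]
    (ψ : S →ₐ[k] T) (c : H.C) : ψ (H.zero S c) = H.zero T c :=
  AlgHom.congr_fun (H.map_zero S T ψ) c

theorem add_prod {S T : Type} [CommRing S] [Algebra k S] [CommRing T] [Algebra k T]
    (f f' : H.C →ₐ[k] S) (g g' : H.C →ₐ[k] T) :
    H.add (S × T) (f.prod g) (f'.prod g') = (H.add S f f').prod (H.add T g g') := by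
  refine AlgHom.ext fun c => Prod.ext ?_ ?_
  · exact AlgHom.congr_fun (H.map_add _ _ (AlgHom.fst k S T) _ _) c
  · exact AlgHom.congr_fun (H.map_add _ _ (AlgHom.snd k S T) _ _) c

end AffAbGrp

section SquareZero

variable (k : Type) {T A : Type} [CommRing k] [CommRing T] [Algebra k T] [CommRing A] [Algebra k A]
  (𝔞 𝔟 : Ideal T)

def Ideal.congrTriples : Subalgebra k (T × T × T) where
  carrier := {w | w.1 - w.2.2 ∈ 𝔞 ∧ w.2.1 - w.2.2 ∈ 𝔞}
  mul_mem' {w w'} hw hw' := by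
    refine ⟨?_, ?_⟩
    · convert 𝔞.add_mem (𝔞.mul_mem_left w.1 hw'.1) (𝔞.mul_mem_right w'.2.2 hw.1) using 1
      simp only [Prod.fst_mul, Prod.snd_mul]; ring
    · convert 𝔞.add_mem (𝔞.mul_mem_left w.2.1 hw'.2) (𝔞.mul_mem_right w'.2.2 hw.2) using 1
      simp only [Prod.fst_mul, Prod.snd_mul]; ring
  add_mem' {w w'} hw hw' := by
    refine ⟨?_, ?_⟩
    · convert 𝔞.add_mem hw.1 hw'.1 using 1
      simp only [Prod.fst_add, Prod.snd_add]; ring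
    · convert 𝔞.add_mem hw.2 hw'.2 using 1
      simp only [Prod.fst_add, Prod.snd_add]; ring
  algebraMap_mem' r := by simp

/-- `(a, b, z) ↦ a + b - z` is multiplicative modulo `𝔟` because
`(a+b-z)(a'+b'-z') - (aa' + bb' - zz') = (a-z)(b'-z') + (b-z)(a'-z')`. -/
def Ideal.congrTriples.sumSub (h𝔞𝔟 : 𝔞 * 𝔞 ≤ 𝔟) : 𝔞.congrTriples k →ₐ[k] T ⧸ 𝔟 where
  toFun w := Ideal.Quotient.mk 𝔟 ((w : T × T × T).1 + (w : T × T × T).2.1 - (w : T × T × T).2.2)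
  map_one' := by simp
  map_zero' := by simp
  map_add' w w' := by
    rw [← map_add]; congr 1
    simp only [Subalgebra.coe_add, Prod.fst_add, Prod.snd_add]; ring
  map_mul' w w' := by
    rw [← map_mul, Ideal.Quotient.eq]
    have h₁ := h𝔞𝔟 (Ideal.mul_mem_mul w.2.1 w'.2.2)
    have h₂ := h𝔞𝔟 (Ideal.mul_mem_mul w.2.2 w'.2.1)
    convert 𝔟.neg_mem (𝔟.add_mem h₁ h₂) using 1
    simp only [Subalgebra.coe_mul, Prod.fst_mul, Prod.snd_mul]; ring
  commutes' r := by simp [Prod.algebraMap_apply]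

variable {k 𝔞 𝔟}

def Ideal.congrTriples.lift (F G Z : A →ₐ[k] T) (hF : ∀ c, F c - Z c ∈ 𝔞)
    (hG : ∀ c, G c - Z c ∈ 𝔞) : A →ₐ[k] 𝔞.congrTriples k :=
  (F.prod (G.prod Z)).codRestrict _ fun c => ⟨hF c, hG c⟩

theorem Ideal.congrTriples.val_comp_lift (F G Z : A →ₐ[k] T) (hF : ∀ c, F c - Z c ∈ 𝔞)
    (hG : ∀ c, G c - Z c ∈ 𝔞) :
    (𝔞.congrTriples k).val.comp (Ideal.congrTriples.lift F G Z hF hG) = F.prod (G.prod Z) :=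
  AlgHom.val_comp_codRestrict _ _ _

theorem Ideal.congrTriples.sumSub_lift (h𝔞𝔟 : 𝔞 * 𝔞 ≤ 𝔟) (F G Z : A →ₐ[k] T)
    (hF : ∀ c, F c - Z c ∈ 𝔞) (hG : ∀ c, G c - Z c ∈ 𝔞) (c : A) :
    Ideal.congrTriples.sumSub k 𝔞 𝔟 h𝔞𝔟 (Ideal.congrTriples.lift F G Z hF hG c)
      = Ideal.Quotient.mk 𝔟 (F c + G c - Z c) :=
  rfl

end SquareZero

namespace AffAbGrp

variable {k : Type} [CommRing k] (H : AffAbGrp k)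

theorem add_apply_sub_mem {T : Type} [CommRing T] [Algebra k T] {𝔞 𝔟 : Ideal T}
    (h𝔞𝔟 : 𝔞 * 𝔞 ≤ 𝔟) {f g : H.C →ₐ[k] T} (hf : ∀ c, f c - H.zero T c ∈ 𝔞)
    (hg : ∀ c, g c - H.zero T c ∈ 𝔞) (c : H.C) :
    H.add T f g c - (f c + g c - H.zero T c) ∈ 𝔟 := by
  set z := H.zero T
  have hz : ∀ c, z c - z c ∈ 𝔞 := fun c => by simp
  have hsum : H.add _ (Ideal.congrTriples.lift f z z hf hz)
      (Ideal.congrTriples.lift z g z hz hg) = Ideal.congrTriples.lift f g z hf hg := by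
    have h := H.map_add _ _ (𝔞.congrTriples k).val (Ideal.congrTriples.lift f z z hf hz)
      (Ideal.congrTriples.lift z g z hz hg)
    rw [Ideal.congrTriples.val_comp_lift, Ideal.congrTriples.val_comp_lift, add_prod, add_prod,
      H.add_zero, H.zero_add, H.add_zero] at h
    exact AlgHom.ext fun c => Subtype.ext (AlgHom.congr_fun h c)
  have hmod : (Ideal.Quotient.mkₐ k 𝔟).comp (H.add T f g)
      = (Ideal.congrTriples.sumSub k 𝔞 𝔟 h𝔞𝔟).comp (Ideal.congrTriples.lift f g z hf hg) := by
    rw [← hsum, H.map_add, H.map_add]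
    congr 1 <;> ext c <;> simp [Ideal.congrTriples.sumSub_lift]
  rw [← Ideal.Quotient.eq]
  exact AlgHom.congr_fun hmod c

end AffAbGrp

namespace AddMonoidAlgebra

section CommMonoid

variable {S S' G : Type*} [CommRing S] [CommRing S'] [AddCommMonoid G]

theorem ker_mapRingHom (f : S →+* S') :
    RingHom.ker (mapRingHom G f) = (RingHom.ker f).map (algebraMap S S[G]) := by
  refine le_antisymm (fun x hx => ?_) (Ideal.map_le_iff_le_comap.mpr fun r hr => ?_)
  · have hcoeff (g : G) : x.coeff g ∈ RingHom.ker f := by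
      simpa using congrArg (fun y => y.coeff g) (RingHom.mem_ker.mp hx)
    rw [← x.sum_coeff_single]
    refine Ideal.sum_mem _ fun g _ => ?_
    rw [← mul_one (x.coeff g), ← smul_eq_mul, ← smul_single, Algebra.smul_def]
    exact Ideal.mul_mem_right _ _ (Ideal.mem_map_of_mem _ (hcoeff g))
  · rw [Ideal.mem_comap, RingHom.mem_ker, ← RingHom.comp_apply, mapRingHom_comp_algebraMap,
      RingHom.comp_apply, RingHom.mem_ker.mp hr, map_zero]

theorem mem_map_algebraMap_iff {I : Ideal S} {x : S[G]} :
    x ∈ I.map (algebraMap S S[G]) ↔ ∀ g, x.coeff g ∈ I := by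
  rw [← I.mk_ker, ← ker_mapRingHom, RingHom.mem_ker, Ideal.mk_ker]
  simp [AddMonoidAlgebra.ext_iff, Finsupp.ext_iff, Ideal.Quotient.eq_zero_iff_mem]

end CommMonoid

theorem coeff_mapDomain_diag_sub_inl_sub_inr {S G : Type*} [CommRing S] [AddCommGroup G]
    (x : S[G]) (g : G) :
    (mapDomain ((AddMonoidHom.id G).prod (AddMonoidHom.id G)) x
      - mapDomain (AddMonoidHom.inl G G) x - mapDomain (AddMonoidHom.inr G G) x).coeff (g, 0)
      = -x.coeff g := by
  have hinl : (mapDomain (AddMonoidHom.inl G G) x).coeff (g, 0) = x.coeff g := by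
    rw [coeff_mapDomain, ← AddMonoidHom.inl_apply, Finsupp.mapDomain_apply]
    exact fun a b h => (Prod.ext_iff.mp h).1
  have hdiag : (mapDomain ((AddMonoidHom.id G).prod (AddMonoidHom.id G)) x).coeff (g, 0) =
      (mapDomain (AddMonoidHom.inr G G) x).coeff (g, 0) := by
    rw [coeff_mapDomain, coeff_mapDomain]
    rcases eq_or_ne g 0 with rfl | hg
    · have hdiag0 := Finsupp.mapDomain_apply (f := (AddMonoidHom.id G).prod (AddMonoidHom.id G))
        (fun a b h => (Prod.ext_iff.mp h).1) x.coeff 0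
      have hinr0 := Finsupp.mapDomain_apply (f := AddMonoidHom.inr G G)
        (fun a b h => (Prod.ext_iff.mp h).2) x.coeff 0
      exact hdiag0.trans hinr0.symm
    · rw [Finsupp.mapDomain_of_notMem_range, Finsupp.mapDomain_of_notMem_range] <;>
        simp [hg, hg.symm]
  simp only [coeff_sub, Finsupp.sub_apply, hinl, hdiag]
  ring

end AddMonoidAlgebra

namespace AffAbGrp

variable {k : Type} [CommRing k] (H : AffAbGrp k) {S G : Type} [CommRing S] [Algebra k S]
  [AddCommGroup G]

/-- `φ ∈ H(S[G])` is primitive when it is a homomorphism `Spec S[G] → H`: the comultiplication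
`g ↦ (g, g)` takes it to the sum of its pullbacks along the two inclusions `G → G × G`. -/
def IsPrimitive (φ : H.C →ₐ[k] S[G]) : Prop :=
  (mapDomainAlgHom k S ((AddMonoidHom.id G).prod (AddMonoidHom.id G))).comp φ =
    H.add _ ((mapDomainAlgHom k S (AddMonoidHom.inl G G)).comp φ)
      ((mapDomainAlgHom k S (AddMonoidHom.inr G G)).comp φ)

theorem sub_zero_mem_map_of_comp_eq_zero {φ : H.C →ₐ[k] S[G]} {I : Ideal S}
    (hφ : (mapAlgHom G (Ideal.Quotient.mkₐ k I)).comp φ = H.zero _) (c : H.C) :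
    φ c - H.zero _ c ∈ I.map (algebraMap S S[G]) := by
  rw [← I.mk_ker, ← ker_mapRingHom, RingHom.mem_ker, map_sub]
  exact sub_eq_zero.mpr ((AlgHom.congr_fun hφ c).trans
    (H.map_zero_apply (mapAlgHom G (Ideal.Quotient.mkₐ k I)) c).symm)

namespace IsPrimitive

variable {H} {φ : H.C →ₐ[k] S[G]}

theorem sub_zero_mem_of_mul_le (hφ : H.IsPrimitive φ) {I J : Ideal S} (hIJ : I * I ≤ J)
    (hI : ∀ c, φ c - H.zero _ c ∈ I.map (algebraMap S S[G])) (c : H.C) :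
    φ c - H.zero _ c ∈ J.map (algebraMap S S[G]) := by
  have hpush (f : G →+ G × G) (c : H.C) :
      (mapDomainAlgHom k S f).comp φ c - H.zero _ c ∈ I.map (algebraMap S S[G × G]) := by
    rw [AlgHom.comp_apply, ← H.map_zero_apply (mapDomainAlgHom k S f), ← map_sub,
      ← mapDomainRingHom_comp_algebraMap (R := S) f, ← Ideal.map_map]
    exact Ideal.mem_map_of_mem _ (hI c)
  have hsq : I.map (algebraMap S S[G × G]) * I.map (algebraMap S S[G × G])
      ≤ J.map (algebraMap S S[G × G]) := by
    rw [← Ideal.map_mul]; exact Ideal.map_mono hIJ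
  have key := H.add_apply_sub_mem hsq (hpush (AddMonoidHom.inl G G))
    (hpush (AddMonoidHom.inr G G)) c
  rw [← show _ = _ from hφ] at key
  have hF (f : G →+ G × G) : (mapDomainAlgHom k S f).comp φ c
      = mapDomainAlgHom k S f (φ c - H.zero _ c) + H.zero _ c := by
    rw [map_sub, H.map_zero_apply, sub_add_cancel, AlgHom.comp_apply]
  rw [hF, hF, hF, show ∀ a b d z : S[G × G], a + z - (b + z + (d + z) - z) = a - b - d by
    intros; abel, mem_map_algebraMap_iff] at key
  rw [mem_map_algebraMap_iff]
  intro g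
  have hg := key (g, 0)
  rwa [mapDomainAlgHom_apply, mapDomainAlgHom_apply, mapDomainAlgHom_apply,
    coeff_mapDomain_diag_sub_inl_sub_inr, J.neg_mem_iff] at hg

theorem eq_zero_of_isNilpotent (hφ : H.IsPrimitive φ) {I : Ideal S} (hI : IsNilpotent I)
    (hφI : ∀ c, φ c - H.zero _ c ∈ I.map (algebraMap S S[G])) : φ = H.zero _ := by
  obtain ⟨n, hn⟩ := hI
  have hpow (r : ℕ) (hr : 1 ≤ r) : ∀ c, φ c - H.zero _ c ∈ (I ^ r).map (algebraMap S S[G]) := by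
    induction r, hr using Nat.le_induction with
    | base => simpa using hφI
    | succ r hr ih =>
      refine hφ.sub_zero_mem_of_mul_le ?_ ih
      rw [← pow_add]; exact Ideal.pow_le_pow_right (by omega)
  refine AlgHom.ext fun c => ?_
  have h := hpow (n + 1) (by omega) c
  rwa [pow_succ, hn, zero_mul, Ideal.zero_eq_bot, Ideal.map_bot, Ideal.mem_bot, sub_eq_zero] at h

end IsPrimitive

end AffAbGrp

section RootsOfUnity

variable {p : ℕ}

theorem muMap_comp {R S T : Type} [CommRing R] [CommRing S] [CommRing T] (ψ : S →+* T)
    (φ : R →+* S) (x : mu p R) : muMap p ψ (muMap p φ x) = muMap p (ψ.comp φ) x :=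
  rfl

theorem muMap_eq_one {R S : Type} [CommRing R] [CommRing S] {ψ : R →+* S} {x : mu p R}
    (h : ψ ((x : Rˣ) : R) = 1) : muMap p ψ x = 1 :=
  Subtype.ext (Units.ext h)

theorem isNilpotent_span_sub_one [Fact p.Prime] {R : Type} [CommRing R] [CharP R p]
    (x : mu p R) : IsNilpotent (Ideal.span {((x : Rˣ) : R) - 1}) := by
  refine ⟨p, ?_⟩
  have hxp : (x : Rˣ) ^ p = 1 := x.2
  rw [Ideal.span_singleton_pow, sub_pow_char, one_pow, ← Units.val_pow_eq_pow_val, hxp]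
  simp

theorem muMap_mapAlgHom_mk_span_sub_one (k : Type) {R G : Type} [CommRing k] [CommRing R]
    [Algebra k R] [AddCommMonoid G] (x : mu p R) :
    muMap p (mapAlgHom G (Ideal.Quotient.mkₐ k (Ideal.span {((x : Rˣ) : R) - 1}))).toRingHom
      (muMap p (algebraMap R R[G]) x) = 1 := by
  refine muMap_eq_one ?_
  change mapRingHom G (Ideal.Quotient.mk _) (algebraMap R R[G] _) = 1
  rw [← RingHom.comp_apply, mapRingHom_comp_algebraMap, RingHom.comp_apply,
    Ideal.Quotient.eq.mpr (Ideal.mem_span_singleton_self _), map_one, map_one]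

variable (p) in
/-- The tautological point of `μ_p` over its coordinate ring `S[ℤ/p]`. -/
noncomputable def muGen (S : Type) [CommRing S] : mu p S[ZMod p] :=
  ⟨⟨single 1 1, single (-1) 1, by simp [single_mul_single, one_def],
    by simp [single_mul_single, one_def]⟩, by
    rw [mu, MonoidHom.mem_ker, powMonoidHom_apply, Units.ext_iff, Units.val_pow_eq_pow_val]
    simp [single_pow, one_def]⟩

theorem muMap_mapDomain_muGen (k : Type) {S G : Type} [CommRing k] [CommRing S] [Algebra k S]
    [AddCommMonoid G] (f : ZMod p →+ G) :
    ((muMap p (mapDomainAlgHom k S f : S[ZMod p] →+* S[G]) (muGen p S) : S[G]ˣ) : S[G])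
      = single (f 1) 1 := by
  simp [muMap, muGen]

noncomputable def muEval {R : Type} [CommRing R] (y : mu p R) : R[ZMod p] →ₐ[R] R :=
  lift R R (ZMod p) <| (Units.coeHom R).comp <| AddMonoidHom.toMultiplicativeLeft <|
    ZMod.lift p ⟨zmultiplesHom _ (Additive.ofMul (y : Rˣ)), by
      rw [zmultiplesHom_apply, natCast_zsmul, ← ofMul_pow]
      exact congrArg Additive.ofMul y.2⟩

theorem muMap_muEval_muGen {R : Type} [CommRing R] (y : mu p R) :
    muMap p (muEval y).toRingHom (muGen p R) = y := by
  refine Subtype.ext (Units.ext ?_)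
  change muEval y (single 1 1) = _
  rw [muEval, lift_single, one_smul, ← Int.cast_one]
  exact congrArg (fun u : Additive Rˣ => ((u.toMul : Rˣ) : R))
    ((ZMod.lift_coe p _ 1).trans (one_zsmul _))

end RootsOfUnity

theorem mup_tensor_mup_eq_zero_general (p : ℕ) [Fact p.Prime] (k : Type) [Field k]
    [CharP k p] (H : AffAbGrp k)
    (b : ∀ (R : Type) [CommRing R] [Algebra k R], mu p R → mu p R → (H.C →ₐ[k] R))
    (hbl : ∀ (R : Type) [CommRing R] [Algebra k R] (x y : mu p R) (z : mu p R),
      b R (x * y) z = H.add R (b R x z) (b R y z))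
    (hbr : ∀ (R : Type) [CommRing R] [Algebra k R] (x : mu p R) (y z : mu p R),
      b R x (y * z) = H.add R (b R x y) (b R x z))
    (hnat : ∀ (R S : Type) [CommRing R] [Algebra k R] [CommRing S] [Algebra k S]
      (ψ : R →ₐ[k] S) (x y : mu p R),
      ψ.comp (b R x y) = b S (muMap p ψ.toRingHom x) (muMap p ψ.toRingHom y)) :
    ∀ (R : Type) [CommRing R] [Algebra k R] (x y : mu p R), b R x y = H.zero R := by
  intro R _ _ x y
  rcases subsingleton_or_nontrivial R with _ | _
  · exact AlgHom.ext fun c => Subsingleton.elim _ _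
  have : CharP R p := charP_of_injective_algebraMap' k p
  set x' := muMap p (algebraMap R R[ZMod p]) x
  set γ := b R[ZMod p] x' (muGen p R)
  have hx' (f : ZMod p →+ ZMod p × ZMod p) : muMap p (mapDomainAlgHom k R f).toRingHom x'
      = muMap p (algebraMap R R[ZMod p × ZMod p]) x := by
    rw [muMap_comp]; congr 1; exact mapDomainRingHom_comp_algebraMap f
  have hγ : H.IsPrimitive γ := by
    rw [AffAbGrp.IsPrimitive, hnat, hnat, hnat, hx', hx', hx', ← hbr]
    congr 1
    exact Subtype.ext (Units.ext (by simp [muMap_mapDomain_muGen k, single_mul_single]))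
  have hγx : ∀ c, γ c - H.zero _ c
      ∈ (Ideal.span {((x : Rˣ) : R) - 1}).map (algebraMap R R[ZMod p]) := by
    refine H.sub_zero_mem_map_of_comp_eq_zero ?_
    rw [hnat, muMap_mapAlgHom_mk_span_sub_one]
    exact H.eq_zero_of_add_self _ (by rw [← hbl, one_mul])
  calc b R x y = ((muEval y).restrictScalars k).comp γ := by
        rw [hnat]; congr
        · exact Subtype.ext (Units.ext ((muEval y).commutes _).symm)
        · exact (muMap_muEval_muGen y).symm
    _ = H.zero R := by
        rw [hγ.eq_zero_of_isNilpotent (isNilpotent_span_sub_one x) hγx, H.map_zero]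

/-- Over an algebraically closed field `k` of characteristic `p`, the
tensor product `μ_p ⊗ μ_p` of affine abelian group schemes is trivial: every bilinear
natural transformation `μ_p × μ_p → H` into an affine abelian group scheme `H` is
trivial, so `0` corepresents bilinear maps out of `μ_p × μ_p`. -/
theorem mup_tensor_mup_eq_zero (p : ℕ) [Fact p.Prime] (k : Type) [Field k] [IsAlgClosed k]
    [CharP k p] (H : AffAbGrp k)
    (b : ∀ (R : Type) [CommRing R] [Algebra k R], mu p R → mu p R → (H.C →ₐ[k] R))
    (hbl : ∀ (R : Type) [CommRing R] [Algebra k R] (x y : mu p R) (z : mu p R),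
      b R (x * y) z = H.add R (b R x z) (b R y z))
    (hbr : ∀ (R : Type) [CommRing R] [Algebra k R] (x : mu p R) (y z : mu p R),
      b R x (y * z) = H.add R (b R x y) (b R x z))
    (hnat : ∀ (R S : Type) [CommRing R] [Algebra k R] [CommRing S] [Algebra k S]
      (ψ : R →ₐ[k] S) (x y : mu p R),
      ψ.comp (b R x y) = b S (muMap p ψ.toRingHom x) (muMap p ψ.toRingHom y)) :
    ∀ (R : Type) [CommRing R] [Algebra k R] (x y : mu p R), b R x y = H.zero R :=
  mup_tensor_mup_eq_zero_general p k H b hbl hbr hnat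
end

section
/- Let k be a perfect field and G any affine abelian group scheme over k. Then 𝔾_m ⊗ G = 0, i.e. the tensor product of the multiplicative group with any affine group scheme is trivial. In particular, the tensor product on affine abelian group schemes over k admits no unit object. -/
variable {k : Type} [CommRing k]

/-- A homomorphism of affine abelian group schemes: a natural additive transformation of
their functors of points. -/
structure AffAbHom (G H : AffAbGrp k) where
  app : ∀ (R : Type) [CommRing R] [Algebra k R], (G.C →ₐ[k] R) → (H.C →ₐ[k] R)
  app_add : ∀ (R : Type) [CommRing R] [Algebra k R] (f g : G.C →ₐ[k] R),
    app R (G.add R f g) = H.add R (app R f) (app R g)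
  app_nat : ∀ (R S : Type) [CommRing R] [Algebra k R] [CommRing S] [Algebra k S]
    (ψ : R →ₐ[k] S) (f : G.C →ₐ[k] R), ψ.comp (app R f) = app S (ψ.comp f)

/-- A bilinear natural transformation `G₁ × G₂ → H` of affine abelian group schemes. -/
structure AffBilin (G₁ G₂ H : AffAbGrp k) where
  b : ∀ (R : Type) [CommRing R] [Algebra k R],
    (G₁.C →ₐ[k] R) → (G₂.C →ₐ[k] R) → (H.C →ₐ[k] R)
  left : ∀ (R : Type) [CommRing R] [Algebra k R] (x y : G₁.C →ₐ[k] R) (z : G₂.C →ₐ[k] R),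
    b R (G₁.add R x y) z = H.add R (b R x z) (b R y z)
  right : ∀ (R : Type) [CommRing R] [Algebra k R] (x : G₁.C →ₐ[k] R) (y z : G₂.C →ₐ[k] R),
    b R x (G₂.add R y z) = H.add R (b R x y) (b R x z)
  nat : ∀ (R S : Type) [CommRing R] [Algebra k R] [CommRing S] [Algebra k S]
    (ψ : R →ₐ[k] S) (x : G₁.C →ₐ[k] R) (y : G₂.C →ₐ[k] R),
    ψ.comp (b R x y) = b S (ψ.comp x) (ψ.comp y)

/-- `(T, a)` is a tensor product of `G₁` and `G₂`: every bilinear natural transformation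
out of `G₁ × G₂` factors uniquely through `a`. -/
def IsTensorProd (G₁ G₂ T : AffAbGrp k) (a : AffBilin G₁ G₂ T) : Prop :=
  ∀ (H : AffAbGrp k) (φ : AffBilin G₁ G₂ H),
    ∃! f : AffAbHom T H, ∀ (R : Type) [CommRing R] [Algebra k R]
      (x : G₁.C →ₐ[k] R) (y : G₂.C →ₐ[k] R), f.app R (a.b R x y) = φ.b R x y

/-- Two affine abelian group schemes are isomorphic if there are mutually inverse
homomorphisms between them. -/
def AffIso (G H : AffAbGrp k) : Prop :=
  ∃ (f : AffAbHom G H) (g : AffAbHom H G),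
    (∀ (R : Type) [CommRing R] [Algebra k R] (x : G.C →ₐ[k] R), g.app R (f.app R x) = x) ∧
    (∀ (R : Type) [CommRing R] [Algebra k R] (y : H.C →ₐ[k] R), f.app R (g.app R y) = y)

/-- `U` is a unit object for the tensor product of affine abelian group schemes. -/
def IsUnitObj (U : AffAbGrp k) : Prop :=
  ∀ G : AffAbGrp k, ∃ (T : AffAbGrp k) (a : AffBilin G U T),
    IsTensorProd G U T a ∧ AffIso T G

/-!
Let `β : 𝔾_m × G → H` be bilinear and let `γ : H.C → G.C[T;T⁻¹]` be its value at the universal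
pair `(T, C)`; every value `β (x, y)` is the specialisation `T ↦ x`, `C ↦ y` of `γ`. Bilinearity
gives `β (T ^ m, C) = m • β (T, C) = β (T, m • C)`: substituting `T ↦ T ^ m` in `γ c` is the same
as applying `m • id` to its coefficients. The first moves the coefficient at `n` to `m * n`, the
second keeps the support in place, and for `m` large `m * n` lies outside the support unless
`n = 0`. So `γ c` is constant, `β (x, y) = β (1, y) = 0`, and `𝔾_m ⊗ G = 0`. A unit `U` would give
`𝔾_m ≅ 𝔾_m ⊗ U = 0`, but `𝔾_m` has the non-zero point `id` over `k[T;T⁻¹]`.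
-/

open LaurentPolynomial AddMonoidAlgebra

namespace LaurentPolynomial

variable {k A R : Type} [CommRing k] [CommRing A] [Algebra k A] [CommRing R] [Algebra k R]

noncomputable def evalUnit (y : A →ₐ[k] R) (x : Rˣ) : A[T;T⁻¹] →ₐ[k] R :=
  liftNCAlgHom y ((Units.coeHom R).comp (zpowersHom Rˣ x)) fun _ _ => .all _ _

lemma evalUnit_C_mul_T (y : A →ₐ[k] R) (x : Rˣ) (a : A) (n : ℤ) :
    evalUnit y x (C a * T n) = y a * ↑(x ^ n) := by
  rw [← single_eq_C_mul_T]
  exact liftNC_single _ _ _ _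

lemma evalUnit_C (y : A →ₐ[k] R) (x : Rˣ) (a : A) : evalUnit y x (C a) = y a := by
  simpa using evalUnit_C_mul_T y x a 0

lemma evalUnit_T (y : A →ₐ[k] R) (x : Rˣ) (n : ℤ) : evalUnit y x (T n) = ↑(x ^ n) := by
  simpa using evalUnit_C_mul_T y x 1 n

lemma evalUnit_comp_singleZeroAlgHom (y : A →ₐ[k] R) (x : Rˣ) :
    (evalUnit y x).comp singleZeroAlgHom = y :=
  AlgHom.ext (evalUnit_C y x)

variable (A) in
noncomputable def unitT : A[T;T⁻¹]ˣ := (of A ℤ).toHomUnits (Multiplicative.ofAdd 1)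

lemma val_unitT_zpow (n : ℤ) : ((unitT A ^ n : A[T;T⁻¹]ˣ) : A[T;T⁻¹]) = T n := by
  rw [unitT, ← map_zpow, ← ofAdd_zsmul, smul_eq_mul, mul_one]
  rfl

lemma units_map_evalUnit_unitT (y : A →ₐ[k] R) (x : Rˣ) :
    Units.map (evalUnit y x).toRingHom.toMonoidHom (unitT A) = x := by
  ext
  simpa [← val_unitT_zpow 1 (A := A)] using evalUnit_T y x 1

lemma coeff_C_mul_T (a : A) (n m : ℤ) : (C a * T n).coeff m = if n = m then a else 0 := by
  rw [← single_eq_C_mul_T, coeff_single, Finsupp.single_apply]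

lemma coeff_evalUnit_unitT_pow (p : A[T;T⁻¹]) {m : ℕ} (hm : m ≠ 0) (n : ℤ) :
    (evalUnit (singleZeroAlgHom : A →ₐ[k] A[T;T⁻¹]) (unitT A ^ m) p).coeff (m * n) =
      p.coeff n := by
  induction p using LaurentPolynomial.induction_on' with
  | add p q hp hq =>
    rw [map_add, coeff_add, coeff_add, Finsupp.add_apply, Finsupp.add_apply, hp, hq]
  | C_mul_T j a =>
    rw [evalUnit_C_mul_T, ← zpow_natCast, ← zpow_mul, val_unitT_zpow, singleZeroAlgHom_apply,
      single_eq_C, coeff_C_mul_T, coeff_C_mul_T]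
    simp only [mul_right_inj' (Int.natCast_ne_zero.mpr hm)]

lemma coeff_evalUnit_comp (f : A →ₐ[k] A) (p : A[T;T⁻¹]) (n : ℤ) :
    (evalUnit ((singleZeroAlgHom : A →ₐ[k] A[T;T⁻¹]).comp f) (unitT A) p).coeff n =
      f (p.coeff n) := by
  induction p using LaurentPolynomial.induction_on' with
  | add p q hp hq =>
    rw [map_add, coeff_add, coeff_add, Finsupp.add_apply, Finsupp.add_apply, hp, hq, map_add]
  | C_mul_T j a =>
    rw [evalUnit_C_mul_T, val_unitT_zpow, AlgHom.comp_apply, singleZeroAlgHom_apply, single_eq_C,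
      coeff_C_mul_T, coeff_C_mul_T, apply_ite f, map_zero]

lemma exists_coeff_natCast_mul_eq_zero (p : R[T;T⁻¹]) {n : ℤ} (hn : n ≠ 0) :
    ∃ m : ℕ, m ≠ 0 ∧ p.coeff (m * n) = 0 := by
  have hinj : Function.Injective fun m : ℕ => (m : ℤ) * n :=
    fun _ _ h => Int.ofNat_inj.mp (mul_right_cancel₀ hn h)
  obtain ⟨m, hm⟩ :=
    Infinite.exists_notMem_finset (insert 0 (p.coeff.support.preimage _ hinj.injOn))
  simp only [Finset.mem_insert, Finset.mem_preimage, Finsupp.mem_support_iff, not_or,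
    not_not] at hm
  exact ⟨m, hm⟩

end LaurentPolynomial

namespace AffAbGrp

def nsmul (K : AffAbGrp k) (R : Type) [CommRing R] [Algebra k R] :
    ℕ → (K.C →ₐ[k] R) → (K.C →ₐ[k] R)
  | 0, _ => K.zero R
  | m + 1, f => K.add R f (nsmul K R m f)

variable (K : AffAbGrp k) {R S : Type} [CommRing R] [Algebra k R] [CommRing S] [Algebra k S]

lemma eq_zero_of_add_self_s13 {f : K.C →ₐ[k] R} (h : K.add R f f = f) : f = K.zero R :=
  calc f = K.add R (K.add R (K.neg R f) f) f := by rw [K.neg_add, K.zero_add]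
    _ = K.add R (K.neg R f) f := by rw [K.add_assoc, h]
    _ = K.zero R := K.neg_add R f

lemma comp_nsmul (ψ : R →ₐ[k] S) (m : ℕ) (f : K.C →ₐ[k] R) :
    ψ.comp (K.nsmul R m f) = K.nsmul S m (ψ.comp f) := by
  induction m with
  | zero => exact K.map_zero R S ψ
  | succ m ih => rw [nsmul, nsmul, K.map_add, ih]

end AffAbGrp

namespace AffAbHom

variable (G H : AffAbGrp k)

def id : AffAbHom G G where
  app _ _ _ f := f
  app_add _ _ _ _ _ := rfl
  app_nat _ _ _ _ _ _ _ _ := rfl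

def zero : AffAbHom G H where
  app R _ _ _ := H.zero R
  app_add R _ _ _ _ := (H.zero_add R _).symm
  app_nat R S _ _ _ _ ψ _ := H.map_zero R S ψ

variable {G H}

lemma app_zero (f : AffAbHom G H) (R : Type) [CommRing R] [Algebra k R] :
    f.app R (G.zero R) = H.zero R :=
  H.eq_zero_of_add_self_s13 (by rw [← f.app_add, G.zero_add])

end AffAbHom

structure GmBilin (G H : AffAbGrp k) where
  b : ∀ (R : Type) [CommRing R] [Algebra k R], Rˣ → (G.C →ₐ[k] R) → (H.C →ₐ[k] R)
  left : ∀ (R : Type) [CommRing R] [Algebra k R] (x y : Rˣ) (z : G.C →ₐ[k] R),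
    b R (x * y) z = H.add R (b R x z) (b R y z)
  right : ∀ (R : Type) [CommRing R] [Algebra k R] (x : Rˣ) (y z : G.C →ₐ[k] R),
    b R x (G.add R y z) = H.add R (b R x y) (b R x z)
  nat : ∀ (R S : Type) [CommRing R] [Algebra k R] [CommRing S] [Algebra k S]
    (ψ : R →ₐ[k] S) (x : Rˣ) (y : G.C →ₐ[k] R),
    ψ.comp (b R x y) = b S (Units.map ψ.toRingHom.toMonoidHom x) (ψ.comp y)

namespace GmBilin

variable {G H : AffAbGrp k} (β : GmBilin G H) {R : Type} [CommRing R] [Algebra k R]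

lemma b_one (y : G.C →ₐ[k] R) : β.b R 1 y = H.zero R :=
  H.eq_zero_of_add_self_s13 (by rw [← β.left, one_mul])

lemma b_zero (x : Rˣ) : β.b R x (G.zero R) = H.zero R :=
  H.eq_zero_of_add_self_s13 (by rw [← β.right, G.zero_add])

lemma b_pow (x : Rˣ) (y : G.C →ₐ[k] R) (m : ℕ) : β.b R (x ^ m) y = H.nsmul R m (β.b R x y) := by
  induction m with
  | zero => rw [pow_zero]; exact β.b_one y
  | succ m ih => rw [pow_succ, β.left, ih, AffAbGrp.nsmul, H.add_comm]

lemma b_nsmul (x : Rˣ) (y : G.C →ₐ[k] R) (m : ℕ) :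
    β.b R x (G.nsmul R m y) = H.nsmul R m (β.b R x y) := by
  induction m with
  | zero => exact β.b_zero x
  | succ m ih => rw [AffAbGrp.nsmul, β.right, ih, AffAbGrp.nsmul]

noncomputable def universal : H.C →ₐ[k] G.C[T;T⁻¹] :=
  β.b _ (unitT G.C) singleZeroAlgHom

lemma b_eq_evalUnit_comp_universal (x : Rˣ) (y : G.C →ₐ[k] R) :
    β.b R x y = (evalUnit y x).comp β.universal := by
  rw [universal, β.nat, units_map_evalUnit_unitT, evalUnit_comp_singleZeroAlgHom]

lemma evalUnit_pow_comp_universal (m : ℕ) :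
    (evalUnit singleZeroAlgHom (unitT G.C ^ m)).comp β.universal =
      (evalUnit (singleZeroAlgHom.comp (G.nsmul G.C m (AlgHom.id k G.C))) (unitT G.C)).comp
        β.universal := by
  rw [← b_eq_evalUnit_comp_universal, ← b_eq_evalUnit_comp_universal, b_pow, G.comp_nsmul,
    AlgHom.comp_id, b_nsmul]

lemma coeff_universal_eq_zero (c : H.C) {n : ℤ} (hn : n ≠ 0) : (β.universal c).coeff n = 0 := by
  obtain ⟨m, hm, hcoeff⟩ := exists_coeff_natCast_mul_eq_zero (β.universal c) hn
  have h := congrArg (fun φ : H.C →ₐ[k] G.C[T;T⁻¹] => (φ c).coeff (m * n))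
    (β.evalUnit_pow_comp_universal m)
  simp only [AlgHom.comp_apply, coeff_evalUnit_unitT_pow _ hm, coeff_evalUnit_comp,
    hcoeff, map_zero] at h
  exact h

lemma universal_eq_C (c : H.C) : β.universal c = C ((β.universal c).coeff 0) := by
  ext n
  rw [← single_eq_C, coeff_single, Finsupp.single_apply]
  split_ifs with h
  · rw [h]
  · exact β.coeff_universal_eq_zero c (Ne.symm h)

theorem b_eq_zero (x : Rˣ) (y : G.C →ₐ[k] R) : β.b R x y = H.zero R := by
  have hconst : (evalUnit y x).comp β.universal = (evalUnit y 1).comp β.universal :=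
    AlgHom.ext fun c => by
      rw [AlgHom.comp_apply, AlgHom.comp_apply, β.universal_eq_C, evalUnit_C, evalUnit_C]
  rw [b_eq_evalUnit_comp_universal, hconst, ← b_eq_evalUnit_comp_universal, b_one]

end GmBilin

section Gm

variable (k) (R : Type) [CommRing R] [Algebra k R]

noncomputable def gmPointsEquiv : (k[T;T⁻¹] →ₐ[k] R) ≃ Rˣ where
  toFun f := Units.map f.toRingHom.toMonoidHom (unitT k)
  invFun x := evalUnit (Algebra.ofId k R) x
  left_inv f := (AddMonoidAlgebra.lift k R ℤ).symm.injective <| MonoidHom.ext fun n => by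
    rw [AddMonoidAlgebra.lift_symm_apply, AddMonoidAlgebra.lift_symm_apply, ← T, evalUnit_T,
      ← map_zpow, Units.coe_map, val_unitT_zpow]
    rfl
  right_inv x := units_map_evalUnit_unitT _ x

variable {k R} {S : Type} [CommRing S] [Algebra k S]

lemma gmPointsEquiv_symm_apply (x : Rˣ) :
    (gmPointsEquiv k R).symm x = evalUnit (Algebra.ofId k R) x :=
  rfl

lemma gmPointsEquiv_comp (ψ : R →ₐ[k] S) (f : k[T;T⁻¹] →ₐ[k] R) :
    gmPointsEquiv k S (ψ.comp f) = Units.map ψ.toRingHom.toMonoidHom (gmPointsEquiv k R f) :=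
  Units.ext rfl

lemma comp_gmPointsEquiv_symm (ψ : R →ₐ[k] S) (x : Rˣ) :
    ψ.comp ((gmPointsEquiv k R).symm x) =
      (gmPointsEquiv k S).symm (Units.map ψ.toRingHom.toMonoidHom x) := by
  rw [Equiv.eq_symm_apply, gmPointsEquiv_comp, Equiv.apply_symm_apply]

end Gm

-- An `abbrev`, so that rewriting sees through `Gm.C = k[T;T⁻¹]` and its instances.
noncomputable abbrev Gm : AffAbGrp k where
  C := k[T;T⁻¹]
  add R _ _ f g := (gmPointsEquiv k R).symm (gmPointsEquiv k R f * gmPointsEquiv k R g)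
  zero R _ _ := (gmPointsEquiv k R).symm 1
  neg R _ _ f := (gmPointsEquiv k R).symm (gmPointsEquiv k R f)⁻¹
  add_assoc _ _ _ _ _ _ := by simp [mul_assoc]
  add_comm _ _ _ _ _ := by rw [mul_comm]
  zero_add _ _ _ _ := by simp
  neg_add _ _ _ _ := by simp
  map_add _ _ _ _ _ _ ψ f g := by
    rw [comp_gmPointsEquiv_symm, map_mul, gmPointsEquiv_comp, gmPointsEquiv_comp]
  map_zero _ _ _ _ _ _ ψ := by rw [comp_gmPointsEquiv_symm, map_one]

lemma Gm_zero_ne_id [Nontrivial k] : (Gm : AffAbGrp k).zero k[T;T⁻¹] ≠ AlgHom.id k k[T;T⁻¹] := by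
  intro h
  have := congrArg (fun f : k[T;T⁻¹] →ₐ[k] k[T;T⁻¹] => (f (T 1)).coeff 1) h
  simp [gmPointsEquiv_symm_apply, evalUnit_T, ← T_zero] at this

noncomputable def AffBilin.toGmBilin {G H : AffAbGrp k} (a : AffBilin Gm G H) : GmBilin G H where
  b R _ _ x y := a.b R ((gmPointsEquiv k R).symm x) y
  left R _ _ x y z := by
    rw [← a.left]
    simp [Gm]
  right R _ _ x y z := a.right R _ y z
  nat R S _ _ _ _ ψ x y := by rw [a.nat, comp_gmPointsEquiv_symm]

lemma AffBilin.b_eq_zero_of_gm {G H : AffAbGrp k} (a : AffBilin Gm G H) (R : Type) [CommRing R]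
    [Algebra k R] (x : (Gm : AffAbGrp k).C →ₐ[k] R) (y : G.C →ₐ[k] R) : a.b R x y = H.zero R := by
  rw [← (gmPointsEquiv k R).symm_apply_apply x]
  exact a.toGmBilin.b_eq_zero _ y

lemma IsTensorProd.eq_zero_of_b_eq_zero {G₁ G₂ T : AffAbGrp k} {a : AffBilin G₁ G₂ T}
    (ha : IsTensorProd G₁ G₂ T a)
    (h0 : ∀ (R : Type) [CommRing R] [Algebra k R] (x : G₁.C →ₐ[k] R) (y : G₂.C →ₐ[k] R),
      a.b R x y = T.zero R)
    (R : Type) [CommRing R] [Algebra k R] (t : T.C →ₐ[k] R) : t = T.zero R := by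
  obtain ⟨f, -, huniq⟩ := ha T a
  have hid : AffAbHom.id T = f := huniq _ fun _ _ _ _ _ => rfl
  have hzero : AffAbHom.zero T T = f := huniq _ fun R _ _ x y => (h0 R x y).symm
  exact congrArg (fun F : AffAbHom T T => F.app R t) (hid.trans hzero.symm)

lemma AffIso.eq_zero_of_eq_zero {G H : AffAbGrp k} (e : AffIso G H)
    (hG : ∀ (R : Type) [CommRing R] [Algebra k R] (x : G.C →ₐ[k] R), x = G.zero R)
    (R : Type) [CommRing R] [Algebra k R] (y : H.C →ₐ[k] R) : y = H.zero R := by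
  obtain ⟨f, g, -, hfg⟩ := e
  rw [← hfg R y, hG R (g.app R y), f.app_zero]

theorem not_isUnitObj [Nontrivial k] (U : AffAbGrp k) : ¬ IsUnitObj U := fun hU => by
  obtain ⟨T, a, ha, e⟩ := hU Gm
  exact Gm_zero_ne_id
    (e.eq_zero_of_eq_zero (ha.eq_zero_of_b_eq_zero a.b_eq_zero_of_gm) _ (AlgHom.id k _)).symm

theorem gm_tensor_eq_zero_and_no_unit_general (k : Type) [Field k]
    (G : AffAbGrp k) :
    (∀ (H : AffAbGrp k)
      (b : ∀ (R : Type) [CommRing R] [Algebra k R],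
        Rˣ → (G.C →ₐ[k] R) → (H.C →ₐ[k] R))
      (_ : ∀ (R : Type) [CommRing R] [Algebra k R] (x y : Rˣ) (z : G.C →ₐ[k] R),
        b R (x * y) z = H.add R (b R x z) (b R y z))
      (_ : ∀ (R : Type) [CommRing R] [Algebra k R] (x : Rˣ) (y z : G.C →ₐ[k] R),
        b R x (G.add R y z) = H.add R (b R x y) (b R x z))
      (_ : ∀ (R S : Type) [CommRing R] [Algebra k R] [CommRing S] [Algebra k S]
        (ψ : R →ₐ[k] S) (x : Rˣ) (y : G.C →ₐ[k] R),
        ψ.comp (b R x y) = b S (Units.map ψ.toRingHom.toMonoidHom x) (ψ.comp y)),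
      ∀ (R : Type) [CommRing R] [Algebra k R] (x : Rˣ) (y : G.C →ₐ[k] R),
        b R x y = H.zero R) ∧
    ¬ ∃ U : AffAbGrp k, IsUnitObj U :=
  ⟨fun _ b left right nat _ _ _ => (GmBilin.mk b left right nat).b_eq_zero,
    fun ⟨U, hU⟩ => not_isUnitObj U hU⟩

/-- Let `k` be a perfect field. Then `𝔾_m ⊗ G = 0` for every affine
abelian group scheme `G` over `k`: every bilinear natural transformation
`𝔾_m × G → H` (where `𝔾_m(R) = Rˣ`) is trivial. In particular, the tensor product of
affine abelian group schemes over `k` admits no unit object. -/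
theorem gm_tensor_eq_zero_and_no_unit (k : Type) [Field k] [PerfectField k]
    (G : AffAbGrp k) :
    (∀ (H : AffAbGrp k)
      (b : ∀ (R : Type) [CommRing R] [Algebra k R],
        Rˣ → (G.C →ₐ[k] R) → (H.C →ₐ[k] R))
      (_ : ∀ (R : Type) [CommRing R] [Algebra k R] (x y : Rˣ) (z : G.C →ₐ[k] R),
        b R (x * y) z = H.add R (b R x z) (b R y z))
      (_ : ∀ (R : Type) [CommRing R] [Algebra k R] (x : Rˣ) (y z : G.C →ₐ[k] R),
        b R x (G.add R y z) = H.add R (b R x y) (b R x z))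
      (_ : ∀ (R S : Type) [CommRing R] [Algebra k R] [CommRing S] [Algebra k S]
        (ψ : R →ₐ[k] S) (x : Rˣ) (y : G.C →ₐ[k] R),
        ψ.comp (b R x y) = b S (Units.map ψ.toRingHom.toMonoidHom x) (ψ.comp y)),
      ∀ (R : Type) [CommRing R] [Algebra k R] (x : Rˣ) (y : G.C →ₐ[k] R),
        b R x y = H.zero R) ∧
    ¬ ∃ U : AffAbGrp k, IsUnitObj U :=
  gm_tensor_eq_zero_and_no_unit_general k G
end

section
/- Let k be an algebraically closed field of characteristic p > 0. The tensor product of the constant group scheme ℤ/pℤ with μ_p in the category of affine abelian group schemes over k is isomorphic to μ_p. -/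
variable {k : Type} [CommRing k]

/-- A bilinear natural transformation `ℤ/pℤ × μ_p → H`, where the constant group scheme
`ℤ/pℤ` over a field of characteristic `p` has functor of points
`R ↦ {r ∈ R : r^p = r}` (with addition as group law). -/
structure ConstMuBilin (p : ℕ) (k : Type) [CommRing k] (H : AffAbGrp k) where
  b : ∀ (R : Type) [CommRing R] [Algebra k R] (r : R), r ^ p = r → mu p R → (H.C →ₐ[k] R)
  left : ∀ (R : Type) [CommRing R] [Algebra k R] (r s : R) (hr : r ^ p = r)
    (hs : s ^ p = s) (hrs : (r + s) ^ p = r + s) (x : mu p R),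
    b R (r + s) hrs x = H.add R (b R r hr x) (b R s hs x)
  right : ∀ (R : Type) [CommRing R] [Algebra k R] (r : R) (hr : r ^ p = r) (x y : mu p R),
    b R r hr (x * y) = H.add R (b R r hr x) (b R r hr y)
  nat : ∀ (R S : Type) [CommRing R] [Algebra k R] [CommRing S] [Algebra k S]
    (ψ : R →ₐ[k] S) (r : R) (hr : r ^ p = r) (hr' : (ψ r) ^ p = ψ r) (x : mu p R),
    ψ.comp (b R r hr x) = b S (ψ r) hr' (muMap p ψ.toRingHom x)

/-!
A point `r` of `ℤ/p` over `R` (that is, `r ^ p = r`) splits `R` into `p` factors on which `r` is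
the constant `i`: the Lagrange idempotents `1 - (r - i) ^ (p - 1)` are complete and orthogonal,
because a polynomial over `k` vanishing on `𝔽_p` is a multiple of `X ^ p - X`. Gluing the powers
`x ^ i` over these factors defines `x ^ r` for `x ∈ μ_p(R)`, and `(r, x) ↦ x ^ r` is bilinear.
It is universal: for any bilinear `φ`, both `φ(r, x)` and `φ(1, x ^ r)` are natural in `R` and
agree on each factor, where `r = i` and `φ(i, x) = φ(1, x ^ i)` by additivity in `r`. So the
tensor product is `μ_p` itself, represented by `k[X] ⧸ (X ^ p - 1)`.
-/

open Polynomial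

noncomputable section

section FiberIdempotents

variable (p : ℕ) (K : Type) [CommRing K] {R : Type} [CommRing R] [Algebra K R]

def indicatorPoly (i : ZMod p) : K[X] := 1 - (X - C (i.cast : K)) ^ (p - 1)

def fiberIdempotent {S : Type} [CommRing S] (r : S) (i : ZMod p) : S := 1 - (r - i.val) ^ (p - 1)

variable [Fact p.Prime]

theorem aeval_indicatorPoly (r : R) (i : ZMod p) :
    aeval r (indicatorPoly p K i) = fiberIdempotent p r i := by
  rw [indicatorPoly, fiberIdempotent, ← ZMod.natCast_val]
  simp only [map_sub, map_one, map_pow, aeval_X, map_natCast]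

variable [CharP K p]

theorem eval_indicatorPoly (i a : ZMod p) :
    (indicatorPoly p K i).eval (a.cast : K) = if a = i then 1 else 0 := by
  rw [indicatorPoly, eval_sub, eval_one, eval_pow, eval_sub, eval_X, eval_C, ← ZMod.cast_sub',
    ← ZMod.cast_pow']
  split_ifs with h
  · rw [h, sub_self, zero_pow (Nat.sub_ne_zero_of_lt (Fact.out : p.Prime).one_lt), ZMod.cast_zero,
      sub_zero]
  · rw [ZMod.pow_card_sub_one_eq_one (sub_ne_zero.2 h), ZMod.cast_one', sub_self]

include K in
theorem natCast_pow_eq_self (n : ℕ) : (n : R) ^ p = n := by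
  rw [← map_natCast (algebraMap K R), ← map_pow, ← ZMod.cast_natCast' (R := K), ← ZMod.cast_pow',
    ZMod.pow_card]

include K in
theorem fiberIdempotent_natCast (n : ℕ) (i : ZMod p) :
    fiberIdempotent p (n : R) i = if (n : ZMod p) = i then 1 else 0 := by
  rw [← aeval_indicatorPoly p K, ← map_natCast (algebraMap K R), ← ZMod.cast_natCast' (R := K) n,
    aeval_algebraMap_apply, coe_aeval_eq_eval, eval_indicatorPoly]
  split_ifs <;> simp

variable [IsDomain K]

/-- Reducing modulo `X ^ p - X`, which vanishes at `r`, leaves a polynomial of degree `< p`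
with `p` roots. -/
theorem aeval_eq_aeval_of_eval_zmod_eq {f g : K[X]}
    (hfg : ∀ a : ZMod p, f.eval (a.cast : K) = g.eval (a.cast : K))
    {r : R} (hr : r ^ p = r) : aeval r f = aeval r g := by
  have hp := (Fact.out : p.Prime).one_lt
  have hmonic : (X ^ p - X : K[X]).Monic := monic_X_pow_sub (by rw [degree_X]; exact_mod_cast hp)
  have hdeg : (X ^ p - X : K[X]).natDegree = p := by
    rw [natDegree_sub_eq_left_of_natDegree_lt] <;> simp [hp]
  have hrem : (f - g) %ₘ (X ^ p - X) = 0 := by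
    refine eq_zero_of_natDegree_lt_card_of_eval_eq_zero _ (ZMod.castHom_injective K)
      (fun a => ?_) ?_
    · have := congrArg (eval (a.cast : K)) (modByMonic_add_div (f - g) (X ^ p - X))
      simpa [hfg, ← ZMod.cast_pow', ZMod.pow_card] using this
    · refine (natDegree_modByMonic_lt _ hmonic fun h => ?_).trans_eq (hdeg.trans (ZMod.card p).symm)
      rw [h, natDegree_one] at hdeg
      omega
  rw [← sub_eq_zero, ← map_sub, ← modByMonic_add_div (f - g) (X ^ p - X), hrem]
  simp [hr]

include K

theorem completeOrthogonalIdempotents_fiberIdempotent {r : R} (hr : r ^ p = r) :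
    CompleteOrthogonalIdempotents (fiberIdempotent p r) := by
  have key f g hfg := aeval_eq_aeval_of_eval_zmod_eq p K (f := f) (g := g) hfg hr
  refine ⟨⟨fun i => ?_, fun i j hij => ?_⟩, ?_⟩
  · simpa [IsIdempotentElem, aeval_indicatorPoly] using
      key (indicatorPoly p K i * indicatorPoly p K i) (indicatorPoly p K i)
        (by simp [eval_indicatorPoly])
  · simpa [aeval_indicatorPoly] using
      key (indicatorPoly p K i * indicatorPoly p K j) 0 (by simp [eval_indicatorPoly]; grind)
  · simpa [aeval_indicatorPoly] using
      key (∑ i, indicatorPoly p K i) 1 (by simp [eval_finsetSum, eval_indicatorPoly])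

theorem fiberIdempotent_mul_sub {r : R} (hr : r ^ p = r) (i : ZMod p) :
    fiberIdempotent p r i * (r - i.val) = 0 := by
  have h := aeval_eq_aeval_of_eval_zmod_eq p K
    (f := indicatorPoly p K i * (X - C (i.cast : K))) (g := 0) (by simp [eval_indicatorPoly]) hr
  rwa [map_mul, aeval_indicatorPoly, map_sub, aeval_X, aeval_C, map_zero, ← ZMod.natCast_val,
    map_natCast] at h

/-- Splitting `R` along the idempotents `fiberIdempotent p r i` reduces an identity in `R` to
the factors `R ⧸ (1 - fiberIdempotent p r i)`, in which `r` becomes the constant `i`. -/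
theorem eq_of_forall_algHom_eq_natCast {r : R} (hr : r ^ p = r) {c d : R}
    (h : ∀ (n : ℕ) (S : Type) [CommRing S] [Algebra K S] (ψ : R →ₐ[K] S), ψ r = n → ψ c = ψ d) :
    c = d := by
  refine (completeOrthogonalIdempotents_fiberIdempotent p K hr).bijective_pi.1
    (funext fun i => h i.val _ (Ideal.Quotient.mkₐ K _) ?_)
  rw [← map_natCast (Ideal.Quotient.mkₐ K _), Ideal.Quotient.mkₐ_eq_mk, Ideal.Quotient.eq,
    Ideal.mem_span_singleton']
  exact ⟨r - i.val, by linear_combination -fiberIdempotent_mul_sub p K hr i⟩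

end FiberIdempotents

theorem pow_val_natCast_of_pow_eq_one {M : Type} [Monoid M] {p : ℕ} {u : M} (hu : u ^ p = 1)
    (n : ℕ) : u ^ (n : ZMod p).val = u ^ n := by
  rw [ZMod.val_natCast, ← pow_eq_pow_mod n hu]

section ZModPow

variable (p : ℕ) [Fact p.Prime] {R S : Type} [CommRing R] [CommRing S]

/-- `u ^ r` for a point `r` of the constant group scheme `ℤ/p`: it is `u ^ i` on the factor of
`R` on which `r = i`. -/
def zmodPow (r u : R) : R := ∑ i : ZMod p, fiberIdempotent p r i * u ^ i.val

theorem map_zmodPow {F : Type} [FunLike F R S] [RingHomClass F R S] (ψ : F) (r u : R) :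
    ψ (zmodPow p r u) = zmodPow p (ψ r) (ψ u) := by
  simp only [zmodPow, fiberIdempotent, map_sum, map_mul, map_sub, map_one, map_pow, map_natCast]

variable (K : Type) [CommRing K] [CharP K p] [Algebra K R]
include K

theorem zmodPow_natCast (n : ℕ) (u : R) : zmodPow p (n : R) u = u ^ (n : ZMod p).val := by
  simp [zmodPow, fiberIdempotent_natCast p K]

variable [IsDomain K]

theorem zmodPow_mul {r : R} (hr : r ^ p = r) (u v : R) :
    zmodPow p r (u * v) = zmodPow p r u * zmodPow p r v := by
  refine eq_of_forall_algHom_eq_natCast p K hr fun n S _ _ ψ hψ => ?_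
  simp only [map_mul, map_zmodPow, hψ, zmodPow_natCast p K, mul_pow]

theorem zmodPow_pow_eq_one {r u : R} (hr : r ^ p = r) (hu : u ^ p = 1) :
    zmodPow p r u ^ p = 1 := by
  refine eq_of_forall_algHom_eq_natCast p K hr fun n S _ _ ψ hψ => ?_
  rw [map_pow, map_zmodPow, hψ, zmodPow_natCast p K, ← pow_mul, mul_comm, pow_mul, ← map_pow, hu,
    map_one, one_pow]

theorem zmodPow_add {r s u : R} (hr : r ^ p = r) (hs : s ^ p = s) (hu : u ^ p = 1) :
    zmodPow p (r + s) u = zmodPow p r u * zmodPow p s u := by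
  refine eq_of_forall_algHom_eq_natCast p K hr fun m S _ _ ψ hψr => ?_
  rw [map_mul, map_zmodPow, map_zmodPow, map_zmodPow, map_add, hψr]
  refine eq_of_forall_algHom_eq_natCast p K (r := ψ s) (by rw [← map_pow, hs])
    fun n T _ _ χ hχs => ?_
  have hv : χ (ψ u) ^ p = 1 := by rw [← map_pow, ← map_pow, hu, map_one, map_one]
  simp only [map_add, map_mul, map_pow, map_zmodPow, hχs, map_natCast, ← Nat.cast_add,
    zmodPow_natCast p K, pow_val_natCast_of_pow_eq_one hv, pow_add]

end ZModPow

section Mu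

variable (p : ℕ) {R S : Type} [CommRing R] [CommRing S]

theorem mu_ext {x y : mu p R} (h : ((x : Rˣ) : R) = (y : Rˣ)) : x = y :=
  Subtype.ext (Units.ext h)

theorem coe_mu_pow_eq_one (x : mu p R) : ((x : Rˣ) : R) ^ p = 1 := by
  rw [← Units.val_pow_eq_pow_val, show (x : Rˣ) ^ p = 1 from x.2, Units.val_one]

theorem muMap_mul (ψ : R →+* S) (x y : mu p R) :
    muMap p ψ (x * y) = muMap p ψ x * muMap p ψ y :=
  mu_ext p (map_mul ψ _ _)

theorem muMap_one (ψ : R →+* S) : muMap p ψ 1 = 1 :=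
  mu_ext p (map_one ψ)

def muMk [NeZero p] (u : R) (hu : u ^ p = 1) : mu p R :=
  ⟨Units.ofPowEqOne u p hu (NeZero.ne p), Units.pow_ofPowEqOne _ _⟩

variable [Fact p.Prime] (K : Type) [CommRing K] [IsDomain K] [CharP K p] [Algebra K R] [Algebra K S]

def muPow {r : R} (hr : r ^ p = r) (x : mu p R) : mu p R :=
  muMk p (zmodPow p r (x : Rˣ)) (zmodPow_pow_eq_one p K hr (coe_mu_pow_eq_one p x))

theorem coe_muPow {r : R} (hr : r ^ p = r) (x : mu p R) :
    ((muPow p K hr x : Rˣ) : R) = zmodPow p r (x : Rˣ) := rfl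

theorem muMap_muPow (ψ : R →ₐ[K] S) {r : R} (hr : r ^ p = r) (hr' : ψ r ^ p = ψ r)
    (x : mu p R) : muMap p ψ.toRingHom (muPow p K hr x) = muPow p K hr' (muMap p ψ.toRingHom x) :=
  mu_ext p (map_zmodPow p ψ r _)

theorem muPow_eq_pow_of_eq_natCast {r : R} (hr : r ^ p = r) {n : ℕ} (h : r = n) (x : mu p R) :
    muPow p K hr x = x ^ n := by
  subst h
  refine mu_ext p ?_
  rw [coe_muPow, zmodPow_natCast p K, pow_val_natCast_of_pow_eq_one (coe_mu_pow_eq_one p x)]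
  simp

theorem muPow_one (x : mu p R) : muPow p K (one_pow p) x = x := by
  rw [muPow_eq_pow_of_eq_natCast p K _ Nat.cast_one.symm, pow_one]

theorem muPow_add {r s : R} (hr : r ^ p = r) (hs : s ^ p = s) (hrs : (r + s) ^ p = r + s)
    (x : mu p R) : muPow p K hrs x = muPow p K hr x * muPow p K hs x :=
  mu_ext p (zmodPow_add p K hr hs (coe_mu_pow_eq_one p x))

theorem muPow_mul {r : R} (hr : r ^ p = r) (x y : mu p R) :
    muPow p K hr (x * y) = muPow p K hr x * muPow p K hr y :=
  mu_ext p (by simp only [coe_muPow, Subgroup.coe_mul, Units.val_mul, zmodPow_mul p K hr])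

end Mu

section MuScheme

variable (p : ℕ) (K : Type) [CommRing K]

theorem AdjoinRoot.root_X_pow_sub_one_pow : AdjoinRoot.root (X ^ p - 1 : K[X]) ^ p = 1 := by
  have h := AdjoinRoot.eval₂_root (X ^ p - 1 : K[X])
  rwa [eval₂_sub, eval₂_X_pow, eval₂_one, sub_eq_zero] at h

variable [NeZero p]

def muPointsEquiv (R : Type) [CommRing R] [Algebra K R] :
    (AdjoinRoot (X ^ p - 1 : K[X]) →ₐ[K] R) ≃ mu p R where
  toFun f := muMk p (f (AdjoinRoot.root _))
    (by rw [← map_pow, AdjoinRoot.root_X_pow_sub_one_pow, map_one])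
  invFun x := AdjoinRoot.liftAlgHom _ (Algebra.ofId K R) (x : Rˣ) (by simp [coe_mu_pow_eq_one])
  left_inv f := AdjoinRoot.algHom_ext (AdjoinRoot.liftAlgHom_root ..)
  right_inv x := mu_ext p (AdjoinRoot.liftAlgHom_root ..)

variable {R S : Type} [CommRing R] [Algebra K R] [CommRing S] [Algebra K S]

theorem muMap_muPointsEquiv (ψ : R →ₐ[K] S) (f : AdjoinRoot (X ^ p - 1 : K[X]) →ₐ[K] R) :
    muMap p ψ.toRingHom (muPointsEquiv p K R f) = muPointsEquiv p K S (ψ.comp f) :=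
  mu_ext p rfl

theorem comp_muPointsEquiv_symm (ψ : R →ₐ[K] S) (x : mu p R) :
    ψ.comp ((muPointsEquiv p K R).symm x) = (muPointsEquiv p K S).symm (muMap p ψ.toRingHom x) := by
  rw [Equiv.eq_symm_apply, ← muMap_muPointsEquiv, Equiv.apply_symm_apply]

abbrev muScheme : AffAbGrp K where
  C := AdjoinRoot (X ^ p - 1 : K[X])
  add R _ _ f g := (muPointsEquiv p K R).symm (muPointsEquiv p K R f * muPointsEquiv p K R g)
  zero R _ _ := (muPointsEquiv p K R).symm 1
  neg R _ _ f := (muPointsEquiv p K R).symm (muPointsEquiv p K R f)⁻¹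
  add_assoc R _ _ f g h := by simp [mul_assoc]
  add_comm R _ _ f g := by simp [mul_comm]
  zero_add R _ _ f := by simp
  neg_add R _ _ f := by simp
  map_add R S _ _ _ _ ψ f g := by
    rw [comp_muPointsEquiv_symm, muMap_mul, muMap_muPointsEquiv, muMap_muPointsEquiv]
  map_zero R S _ _ _ _ ψ := by rw [comp_muPointsEquiv_symm, muMap_one]

theorem muScheme_add (f g : (muScheme p K).C →ₐ[K] R) :
    (muScheme p K).add R f g =
      (muPointsEquiv p K R).symm (muPointsEquiv p K R f * muPointsEquiv p K R g) := rfl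

end MuScheme

theorem AffAbGrp.add_right_cancel {K : Type} [CommRing K] (H : AffAbGrp K) {R : Type}
    [CommRing R] [Algebra K R] {a b c : H.C →ₐ[K] R} (h : H.add R a c = H.add R b c) : a = b := by
  have add_neg_cancel (x : H.C →ₐ[K] R) : H.add R (H.add R x c) (H.neg R c) = x := by
    rw [H.add_assoc, H.add_comm R c, H.neg_add, H.add_comm, H.zero_add]
  rw [← add_neg_cancel a, h, add_neg_cancel]

@[ext]
theorem AffAbHom.ext {K : Type} [CommRing K] {G H : AffAbGrp K} {f g : AffAbHom G H}
    (h : ∀ (R : Type) [CommRing R] [Algebra K R] (x : G.C →ₐ[K] R), f.app R x = g.app R x) :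
    f = g := by
  obtain ⟨f, _, _⟩ := f
  obtain ⟨g, _, _⟩ := g
  have : @f = @g := by funext R _ _ x; exact h R x
  subst this
  rfl

section Universal

variable (p : ℕ) [Fact p.Prime] (K : Type) [CommRing K] [IsDomain K] [CharP K p]

def powBilin : ConstMuBilin p K (muScheme p K) where
  b R _ _ r hr x := (muPointsEquiv p K R).symm (muPow p K hr x)
  left R _ _ r s hr hs hrs x := by
    rw [muScheme_add, Equiv.apply_symm_apply, Equiv.apply_symm_apply, muPow_add p K hr hs hrs]
  right R _ _ r hr x y := by
    rw [muScheme_add, Equiv.apply_symm_apply, Equiv.apply_symm_apply, muPow_mul]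
  nat R S _ _ _ _ ψ r hr hr' x := by
    rw [comp_muPointsEquiv_symm, muMap_muPow p K ψ hr hr']

variable {R : Type} [CommRing R] [Algebra K R]

theorem powBilin_b {r : R} (hr : r ^ p = r) (x : mu p R) :
    (powBilin p K).b R r hr x = (muPointsEquiv p K R).symm (muPow p K hr x) := rfl

theorem powBilin_b_one (f : (muScheme p K).C →ₐ[K] R) :
    (powBilin p K).b R 1 (one_pow p) (muPointsEquiv p K R f) = f := by
  rw [powBilin_b, muPow_one, Equiv.symm_apply_apply]

end Universal

namespace ConstMuBilin

variable {p : ℕ} {K : Type} [CommRing K] {H : AffAbGrp K} (φ : ConstMuBilin p K H)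
  {R : Type} [CommRing R] [Algebra K R]

section Lift

variable [NeZero p]

def lift : AffAbHom (muScheme p K) H where
  app R _ _ f := φ.b R 1 (one_pow p) (muPointsEquiv p K R f)
  app_add R _ _ f g := by rw [muScheme_add, Equiv.apply_symm_apply, φ.right]
  app_nat R S _ _ _ _ ψ f := by
    simp only [φ.nat R S ψ 1 (one_pow p) (by rw [map_one, one_pow]), map_one, muMap_muPointsEquiv]

theorem lift_app (f : (muScheme p K).C →ₐ[K] R) :
    φ.lift.app R f = φ.b R 1 (one_pow p) (muPointsEquiv p K R f) := rfl

end Lift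

variable [Fact p.Prime] [CharP K p]

theorem b_eq_b_one_pow_of_eq_natCast {r : R} (hr : r ^ p = r) {n : ℕ} (h : r = n)
    (x : mu p R) : φ.b R r hr x = φ.b R 1 (one_pow p) (x ^ n) := by
  induction n generalizing r with
  | zero =>
    obtain rfl : r = 0 := h.trans Nat.cast_zero
    refine H.add_right_cancel (c := φ.b R 1 (one_pow p) x) ?_
    rw [← φ.left R 0 1 hr (one_pow p) (by rw [zero_add, one_pow]), pow_zero, ← φ.right, one_mul]
    congr 1
    exact zero_add 1
  | succ n ih =>
    obtain rfl : r = n + 1 := h.trans (Nat.cast_succ n)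
    rw [φ.left R n 1 (natCast_pow_eq_self p K n) (one_pow p) hr, ih _ rfl, ← φ.right, ← pow_succ]

variable [IsDomain K]

theorem b_eq_b_one_muPow {r : R} (hr : r ^ p = r) (x : mu p R) :
    φ.b R r hr x = φ.b R 1 (one_pow p) (muPow p K hr x) := by
  ext a
  refine eq_of_forall_algHom_eq_natCast p K hr fun n S _ _ ψ hψ => ?_
  have hψr : ψ r ^ p = ψ r := by rw [← map_pow, hr]
  rw [← AlgHom.comp_apply, ← AlgHom.comp_apply, φ.nat R S ψ r hr hψr,
    φ.nat R S ψ 1 (one_pow p) (by rw [map_one, one_pow]), muMap_muPow p K ψ hr hψr,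
    φ.b_eq_b_one_pow_of_eq_natCast hψr hψ]
  simp only [map_one, muPow_eq_pow_of_eq_natCast p K hψr hψ]

theorem lift_app_powBilin_b {r : R} (hr : r ^ p = r) (x : mu p R) :
    φ.lift.app R ((powBilin p K).b R r hr x) = φ.b R r hr x := by
  rw [lift_app, powBilin_b, Equiv.apply_symm_apply]
  exact (φ.b_eq_b_one_muPow hr x).symm

theorem eq_lift {f : AffAbHom (muScheme p K) H}
    (hf : ∀ (R : Type) [CommRing R] [Algebra K R] (r : R) (hr : r ^ p = r) (x : mu p R),
      f.app R ((powBilin p K).b R r hr x) = φ.b R r hr x) : f = φ.lift := by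
  refine AffAbHom.ext fun R _ _ g => ?_
  calc f.app R g = f.app R ((powBilin p K).b R 1 (one_pow p) (muPointsEquiv p K R g)) := by
        rw [powBilin_b_one]
    _ = φ.lift.app R g := hf R 1 (one_pow p) _

end ConstMuBilin

end

theorem const_zp_tensor_mup_general (p : ℕ) [Fact p.Prime] (k : Type) [Field k] [CharP k p] :
    ∃ (T : AffAbGrp k) (a : ConstMuBilin p k T),
      (∀ (H : AffAbGrp k) (φ : ConstMuBilin p k H),
        ∃! f : AffAbHom T H, ∀ (R : Type) [CommRing R] [Algebra k R]
          (r : R) (hr : r ^ p = r) (x : mu p R),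
          f.app R (a.b R r hr x) = φ.b R r hr x) ∧
      ∃ e : ∀ (R : Type) [CommRing R] [Algebra k R], (T.C →ₐ[k] R) ≃ mu p R,
        (∀ (R : Type) [CommRing R] [Algebra k R] (f g : T.C →ₐ[k] R),
          e R (T.add R f g) = e R f * e R g) ∧
        (∀ (R S : Type) [CommRing R] [Algebra k R] [CommRing S] [Algebra k S]
          (ψ : R →ₐ[k] S) (f : T.C →ₐ[k] R),
          muMap p ψ.toRingHom (e R f) = e S (ψ.comp f)) := by
  refine ⟨muScheme p k, powBilin p k, fun H φ => ⟨φ.lift, fun R _ _ r hr x =>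
    φ.lift_app_powBilin_b hr x, fun f hf => φ.eq_lift hf⟩, fun R _ _ => muPointsEquiv p k R,
    fun R _ _ f g => ?_, fun R S _ _ _ _ ψ f => muMap_muPointsEquiv p k ψ f⟩
  rw [muScheme_add, Equiv.apply_symm_apply]

/-- Over an algebraically closed field `k` of characteristic `p > 0`,
the tensor product of the constant group scheme `ℤ/pℤ` with `μ_p` is isomorphic to `μ_p`:
there is an affine abelian group scheme `T` together with a universal bilinear natural
transformation `ℤ/pℤ × μ_p → T`, whose functor of points is naturally isomorphic (as
group-valued functors) to `μ_p`. -/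
theorem const_zp_tensor_mup (p : ℕ) [Fact p.Prime] (k : Type) [Field k] [IsAlgClosed k]
    [CharP k p] :
    ∃ (T : AffAbGrp k) (a : ConstMuBilin p k T),
      (∀ (H : AffAbGrp k) (φ : ConstMuBilin p k H),
        ∃! f : AffAbHom T H, ∀ (R : Type) [CommRing R] [Algebra k R]
          (r : R) (hr : r ^ p = r) (x : mu p R),
          f.app R (a.b R r hr x) = φ.b R r hr x) ∧
      ∃ e : ∀ (R : Type) [CommRing R] [Algebra k R], (T.C →ₐ[k] R) ≃ mu p R,
        (∀ (R : Type) [CommRing R] [Algebra k R] (f g : T.C →ₐ[k] R),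
          e R (T.add R f g) = e R f * e R g) ∧
        (∀ (R S : Type) [CommRing R] [Algebra k R] [CommRing S] [Algebra k S]
          (ψ : R →ₐ[k] S) (f : T.C →ₐ[k] R),
          muMap p ψ.toRingHom (e R f) = e S (ψ.comp f)) :=
  const_zp_tensor_mup_general p k
end

section
/- Let K and L be left modules over the Dieudonné ring ℛ = W(k)⟨F,V⟩/(FV−p, VF−p, Fa−φ(a)F, aV−Vφ(a)) for a perfect field k of characteristic p, and suppose F acts bijectively on K. Let K * L = Tor₁^{W(k)}(K, L) with diagonal F-action, and define K ⊠* L ⊆ Hom_ℱ(ℛ, K*L) as the set of ℱ-linear maps f with (1*F)f(Vr) = (V*1)f(r) and (F*1)f(Vr) = (1*V)f(r) for all r ∈ ℛ. Then the evaluation map π : K ⊠* L → K * L, f ↦ f(1), is an isomorphism. -/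
open CategoryTheory

section

variable (p : ℕ) [Fact p.Prime] (k : Type) [Field k] [CharP k p] [PerfectRing k p]
variable (K L : Type) [AddCommGroup K] [Module (WittVector p k) K]
  [AddCommGroup L] [Module (WittVector p k) L]

/-- The torsion product `K * L = Tor₁^{W(k)}(K, L)`. -/
noncomputable abbrev TorKL : Type :=
  (((Tor (ModuleCat (WittVector p k)) 1).obj (ModuleCat.of (WittVector p k) K)).obj
    (ModuleCat.of (WittVector p k) L))

end

/-- Let `K`, `L` be Dieudonné modules over a perfect field `k` of
characteristic `p` (i.e. `W(k)`-modules with Frobenius-semilinear `F` and inverse-Frobenius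
semilinear `V` satisfying `FV = VF = p`), and suppose `F` acts bijectively on `K`.
Let `K * L = Tor₁^{W(k)}(K, L)`, equipped with the operators `F*1`, `1*F`, `V*1`, `1*V`
induced by functoriality (which satisfy the same relations slotwise and commute across
slots, `F*1` being bijective since `F` is bijective on `K`).  An `ℱ`-linear map
`f : ℛ → K * L` is determined by the sequence `xᵢ = f(Vⁱ)`, so that
`K ⊠* L = {f : ℛ → K*L | (1*F) f(Vr) = (V*1) f(r), (F*1) f(Vr) = (1*V) f(r)}`
is identified with the set of sequences `x : ℕ → K * L` with
`(1*F) x_{i+1} = (V*1) xᵢ` and `(F*1) x_{i+1} = (1*V) xᵢ`.  Then the evaluation map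
`π : K ⊠* L → K * L`, `f ↦ f(1) = x₀`, is a bijection. -/
theorem boxast_eval_bijective (p : ℕ) [Fact p.Prime] (k : Type) [Field k] [CharP k p]
    [PerfectRing k p]
    (K L : Type) [AddCommGroup K] [Module (WittVector p k) K]
    [AddCommGroup L] [Module (WittVector p k) L]
    (FK VK : K →+ K) (FL VL : L →+ L)
    (hFK : ∀ (a : WittVector p k) (x : K), FK (a • x) = WittVector.frobenius a • FK x)
    (hVK : ∀ (a : WittVector p k) (x : K),
      VK (a • x) = (WittVector.frobeniusEquiv p k).symm a • VK x)
    (hKFV : ∀ x : K, FK (VK x) = p • x) (hKVF : ∀ x : K, VK (FK x) = p • x)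
    (hFL : ∀ (a : WittVector p k) (x : L), FL (a • x) = WittVector.frobenius a • FL x)
    (hVL : ∀ (a : WittVector p k) (x : L),
      VL (a • x) = (WittVector.frobeniusEquiv p k).symm a • VL x)
    (hLFV : ∀ x : L, FL (VL x) = p • x) (hLVF : ∀ x : L, VL (FL x) = p • x)
    (hFKbij : Function.Bijective FK)
    -- the operators `F*1`, `1*F`, `V*1`, `1*V` on `K * L`
    (F1 F2 V1 V2 : TorKL p k K L →+ TorKL p k K L)
    (hF1 : ∀ (a : WittVector p k) (x : TorKL p k K L),
      F1 (a • x) = WittVector.frobenius a • F1 x)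
    (hF2 : ∀ (a : WittVector p k) (x : TorKL p k K L),
      F2 (a • x) = WittVector.frobenius a • F2 x)
    (hV1 : ∀ (a : WittVector p k) (x : TorKL p k K L),
      V1 (a • x) = (WittVector.frobeniusEquiv p k).symm a • V1 x)
    (hV2 : ∀ (a : WittVector p k) (x : TorKL p k K L),
      V2 (a • x) = (WittVector.frobeniusEquiv p k).symm a • V2 x)
    (hFV1 : ∀ x, F1 (V1 x) = p • x) (hVF1 : ∀ x, V1 (F1 x) = p • x)
    (hFV2 : ∀ x, F2 (V2 x) = p • x) (hVF2 : ∀ x, V2 (F2 x) = p • x)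
    (hc1 : ∀ x, F1 (F2 x) = F2 (F1 x)) (hc2 : ∀ x, F1 (V2 x) = V2 (F1 x))
    (hc3 : ∀ x, V1 (F2 x) = F2 (V1 x)) (hc4 : ∀ x, V1 (V2 x) = V2 (V1 x))
    (hF1bij : Function.Bijective F1) :
    Function.Bijective
      (fun f : {x : ℕ → TorKL p k K L //
          ∀ i : ℕ, F2 (x (i + 1)) = V1 (x i) ∧ F1 (x (i + 1)) = V2 (x i)} =>
        f.1 0) := by
  let e := Equiv.ofBijective F1 hF1bij
  have he : ∀ z, F1 (e.symm z) = z := fun z => e.apply_symm_apply z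
  constructor
  · rintro ⟨a, ha⟩ ⟨b, hb⟩ h
    simp only at h
    have : a = b := by
      funext i
      induction i with
      | zero => exact h
      | succ n ih =>
        apply hF1bij.1
        rw [(ha n).2, (hb n).2, ih]
    exact Subtype.ext this
  · intro y
    let x : ℕ → TorKL p k K L := fun n => Nat.rec y (fun _ xn => e.symm (V2 xn)) n
    have hxs : ∀ n, x (n + 1) = e.symm (V2 (x n)) := fun n => rfl
    refine ⟨⟨x, fun i => ?_⟩, rfl⟩
    rw [hxs]
    constructor
    · apply hF1bij.1
      rw [hc1, he, hFV2, hFV1]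
    · exact he _
end
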